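/- arXiv:2501.02557 — 7 statements merged into one kernel-verified Lean document; each statement's English description precedes it below -/
import Mathlib

section
/- The λ-shuffle product on words over a commutative algebra A is associative: for all words u, v, w in the free vector space on words over A, (u ⧢_λ v) ⧢_λ w = u ⧢_λ (v ⧢_λ w). -/
/-- The free `K`-vector space on words in the alphabet `A`. -/
abbrev WV (K A : Type) [Semiring K] := List A →₀ K

/-- Linear extension of prepending the letter `a` to a word. -/
noncomputable def consL {K A : Type} [Semiring K] (a : A) : WV K A →ₗ[K] WV K A :=
  Finsupp.lmapDomain K K (fun w => a :: w)

/-- the λ-shuffle product on words over a commutative algebra `A`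
is associative.  `sh` is (the restriction to basis words of) the λ-shuffle,
`Sh` its bilinear extension. -/
theorem lambda_shuffle_assoc {K A : Type} [Field K] [CommRing A] [Algebra K A] (lam : K)
    (sh : List A → List A → WV K A)
    (h0l : ∀ w, sh [] w = Finsupp.single w 1)
    (h0r : ∀ w, sh w [] = Finsupp.single w 1)
    (hrec : ∀ (a b : A) (u v : List A),
      sh (a :: u) (b :: v) =
        consL a (sh u (b :: v)) + consL b (sh (a :: u) v) + lam • consL (a * b) (sh u v))
    (Sh : WV K A →ₗ[K] WV K A →ₗ[K] WV K A)
    (hSh : Sh = (Finsupp.lift (WV K A →ₗ[K] WV K A) K (List A))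
      (fun u => (Finsupp.lift (WV K A) K (List A)) (sh u))) :
    ∀ u v w : List A,
      Sh (sh u v) (Finsupp.single w 1) = Sh (Finsupp.single u 1) (sh v w) := by
  have Sh_ss : ∀ u v : List A,
      Sh (Finsupp.single u 1) (Finsupp.single v 1) = sh u v := by
    intro u v
    simp [hSh, Finsupp.lift_apply, Finsupp.sum_single_index]
  have consL_single : ∀ (a : A) (u : List A) (r : K),
      consL (K := K) a (Finsupp.single u r) = Finsupp.single (a::u) r := by
    intro a u r
    simp [consL, Finsupp.lmapDomain_apply, Finsupp.mapDomain_single]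
  -- left unit
  have hA : ∀ x : WV K A, Sh (Finsupp.single [] 1) x = x := by
    intro x
    induction x using Finsupp.induction_linear with
    | zero => simp
    | add p q hp hq => simp [hp, hq]
    | single v r =>
      have : (Finsupp.single v r : WV K A) = r • Finsupp.single v 1 := by
        simp [Finsupp.smul_single']
      rw [this, map_smul, Sh_ss, h0l]
  -- right unit
  have hB : ∀ x : WV K A, Sh x (Finsupp.single [] 1) = x := by
    intro x
    induction x using Finsupp.induction_linear with
    | zero => simp
    | add p q hp hq => simp [hp, hq]
    | single u r =>
      have : (Finsupp.single u r : WV K A) = r • Finsupp.single u 1 := by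
        simp [Finsupp.smul_single']
      rw [this, map_smul, LinearMap.smul_apply, Sh_ss, h0r]
  -- cons-cons expansion, bilinear version
  have hC : ∀ (a b : A) (x y : WV K A),
      Sh (consL a x) (consL b y) =
        consL a (Sh x (consL b y)) + consL b (Sh (consL a x) y)
          + lam • consL (a * b) (Sh x y) := by
    intro a b x y
    induction x using Finsupp.induction_linear with
    | zero => simp
    | add p q hp hq =>
      simp only [map_add, LinearMap.add_apply, hp, hq, smul_add]
      abel
    | single u r =>
      induction y using Finsupp.induction_linear with
      | zero => simp
      | add p q hp hq =>
        simp only [map_add, hp, hq, smul_add]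
        abel
      | single v s =>
        have hu : (Finsupp.single u r : WV K A) = r • Finsupp.single u 1 := by
          simp [Finsupp.smul_single']
        have hv : (Finsupp.single v s : WV K A) = s • Finsupp.single v 1 := by
          simp [Finsupp.smul_single']
        rw [hu, hv]
        simp only [map_smul, LinearMap.smul_apply, consL_single, Sh_ss, hrec a b u v]
        simp only [map_add, map_smul, smul_add, Sh_ss, consL_single]
        rw [← Sh_ss u (b::v), ← consL_single b v 1, ← Sh_ss (a::u) v, ← consL_single a u 1,
          ← Sh_ss u v]
        module
  -- the associativity statement on basis vectors, by strong induction on total length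
  suffices H : ∀ n : ℕ, ∀ u v w : List A, u.length + v.length + w.length = n →
      Sh (Sh (Finsupp.single u 1) (Finsupp.single v 1)) (Finsupp.single w 1)
        = Sh (Finsupp.single u 1) (Sh (Finsupp.single v 1) (Finsupp.single w 1)) by
    intro u v w
    rw [← Sh_ss u v, ← Sh_ss v w]
    exact H _ u v w rfl
  intro n
  induction n using Nat.strong_induction_on with
  | _ n ih =>
    intro u v w hn
    have I : ∀ u' v' w' : List A, u'.length + v'.length + w'.length < n →
        Sh (Sh (Finsupp.single u' 1) (Finsupp.single v' 1)) (Finsupp.single w' 1)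
          = Sh (Finsupp.single u' 1) (Sh (Finsupp.single v' 1) (Finsupp.single w' 1)) :=
      fun u' v' w' h => ih _ h u' v' w' rfl
    match u, v, w with
    | [], v, w => rw [hA, hA]
    | u, [], w => rw [hB, hA]
    | u, v, [] => rw [hB, hB]
    | a :: u, b :: v, c :: w =>
      subst hn
      have e1 := I u (b::v) (c::w) (by simp only [List.length_cons]; omega)
      have e2 := I (a::u) v (c::w) (by simp only [List.length_cons]; omega)
      have e3 := I u v (c::w) (by simp only [List.length_cons]; omega)
      have e4 := I (a::u) (b::v) w (by simp only [List.length_cons]; omega)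
      have e5 := I u (b::v) w (by simp only [List.length_cons]; omega)
      have e6 := I (a::u) v w (by simp only [List.length_cons]; omega)
      have e7 := I u v w (by simp only [List.length_cons]; omega)
      set U' : WV K A := Finsupp.single u 1 with hU'
      set V' : WV K A := Finsupp.single v 1 with hV'
      set W' : WV K A := Finsupp.single w 1 with hW'
      have hu : (Finsupp.single (a::u) 1 : WV K A) = consL a U' := (consL_single a u 1).symm
      have hv : (Finsupp.single (b::v) 1 : WV K A) = consL b V' := (consL_single b v 1).symm
      have hw : (Finsupp.single (c::w) 1 : WV K A) = consL c W' := (consL_single c w 1).symm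
      simp only [hu, hv, hw] at e1 e2 e3 e4 e5 e6 e7 ⊢
      set U : WV K A := consL a U'
      set V : WV K A := consL b V'
      set W : WV K A := consL c W'
      have keyL : Sh (Sh U V) W
          = consL a (Sh (Sh U' V) W) + consL b (Sh (Sh U V') W)
            + lam • consL (a*b) (Sh (Sh U' V') W)
            + consL c (Sh (Sh U V) W')
            + lam • consL (a*c) (Sh (Sh U' V) W')
            + lam • consL (b*c) (Sh (Sh U V') W')
            + lam • lam • consL ((a*b)*c) (Sh (Sh U' V') W') := by
        simp +zetaDelta only [hC, map_add, map_smul, LinearMap.add_apply, LinearMap.smul_apply, smul_add]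
        module
      have keyR : Sh U (Sh V W)
          = consL a (Sh U' (Sh V W)) + consL b (Sh U (Sh V' W))
            + lam • consL (a*b) (Sh U' (Sh V' W))
            + consL c (Sh U (Sh V W'))
            + lam • consL (a*c) (Sh U' (Sh V W'))
            + lam • consL (b*c) (Sh U (Sh V' W'))
            + lam • lam • consL (a*(b*c)) (Sh U' (Sh V' W')) := by
        simp +zetaDelta only [hC, map_add, map_smul, LinearMap.add_apply, LinearMap.smul_apply, smul_add]
        module
      rw [keyL, keyR, e1, e2, e3, e4, e5, e6, e7, mul_assoc]
end

section
/- The deconcatenation coproduct Δ on rooted trees is coassociative: (Δ ⊗ Id) ∘ Δ = (Id ⊗ Δ) ∘ Δ on the vector space of Ω-decorated rooted trees. -/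
set_option maxHeartbeats 1000000
set_option synthInstance.maxHeartbeats 1000000


/-- Ω-decorated (planar representatives of) rooted trees. -/
inductive RTree (Ω : Type) : Type where
  | node : Ω → List (RTree Ω) → RTree Ω

/-- A rooted forest is a (finite) list of rooted trees. -/
abbrev RForest (Ω : Type) := List (RTree Ω)

/-- The free ℚ-vector space on rooted forests. -/
abbrev FV (Ω : Type) := RForest Ω →₀ ℚ

/-- Linear extension of the grafting operator `B₊^a`. -/
noncomputable def graftF {Ω : Type} (a : Ω) : FV Ω →ₗ[ℚ] FV Ω :=
  Finsupp.lmapDomain ℚ ℚ (fun F => [RTree.node a F])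

/-- A forest is a tree when it has at most one connected component
(the empty forest is the empty tree). -/
def IsTree {Ω : Type} (F : RForest Ω) : Prop := F.length ≤ 1

open TensorProduct in
/-- the deconcatenation coproduct `Δ` on rooted trees is
coassociative: `(Δ ⊗ Id) ∘ Δ = (Id ⊗ Δ) ∘ Δ` on rooted trees.
`ΔL` denotes the linear extension of `Δ` to the free vector space. -/
theorem deconcat_coassoc {Ω : Type}
    (Δ : RForest Ω → TensorProduct ℚ (FV Ω) (FV Ω))
    (hΔ0 : Δ [] = Finsupp.single [] 1 ⊗ₜ[ℚ] Finsupp.single [] 1)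
    (hΔtree : ∀ (a : Ω) (t : RForest Ω), IsTree t →
      Δ [RTree.node a t] =
        TensorProduct.map (graftF a) LinearMap.id (Δ t)
          + Finsupp.single [] 1 ⊗ₜ[ℚ] Finsupp.single [RTree.node a t] 1)
    (hΔforest : ∀ (a : Ω) (f : RForest Ω), 2 ≤ f.length →
      Δ [RTree.node a f] = Finsupp.single [] 1 ⊗ₜ[ℚ] Finsupp.single [RTree.node a f] 1)
    (ΔL : FV Ω →ₗ[ℚ] TensorProduct ℚ (FV Ω) (FV Ω))
    (hΔL : ΔL = (Finsupp.lift (TensorProduct ℚ (FV Ω) (FV Ω)) ℚ (RForest Ω)) Δ) :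
    ∀ T : RForest Ω, IsTree T →
      (TensorProduct.assoc ℚ (FV Ω) (FV Ω) (FV Ω))
          (TensorProduct.map ΔL LinearMap.id (Δ T))
        = TensorProduct.map LinearMap.id ΔL (Δ T) := by
  classical
  set e : FV Ω := Finsupp.single [] 1 with he
  have hΔLs : ∀ F : RForest Ω, ΔL (Finsupp.single F 1) = Δ F := by
    intro F
    rw [hΔL, Finsupp.lift_apply, Finsupp.sum_single_index (by rw [zero_smul]), one_smul]
  have hgr : ∀ (a : Ω) (F : RForest Ω),
      graftF a (Finsupp.single F (1:ℚ)) = Finsupp.single [RTree.node a F] 1 := by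
    intro a F
    rw [graftF, Finsupp.lmapDomain_apply, Finsupp.mapDomain_single]
  set W : Submodule ℚ (TensorProduct ℚ (FV Ω) (FV Ω)) :=
    Submodule.span ℚ {z | ∃ F y, IsTree F ∧ z = Finsupp.single F 1 ⊗ₜ[ℚ] y} with hWdef
  have hWgen : ∀ (F : RForest Ω) (y : FV Ω), IsTree F →
      Finsupp.single F 1 ⊗ₜ[ℚ] y ∈ W := by
    intro F y hF
    exact Submodule.subset_span ⟨F, y, hF, rfl⟩
  have hWB : ∀ (a : Ω), ∀ z ∈ W, TensorProduct.map (graftF a) LinearMap.id z ∈ W := by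
    intro a z hz
    induction hz using Submodule.span_induction with
    | mem x hx =>
        obtain ⟨F, y, hF, rfl⟩ := hx
        rw [TensorProduct.map_tmul, hgr]
        exact hWgen _ _ (by simp [IsTree])
    | zero =>
        rw [LinearMap.map_zero]
        exact W.zero_mem
    | add x y hx hy ihx ihy =>
        rw [map_add (TensorProduct.map (graftF a) LinearMap.id) x y]
        exact W.add_mem ihx ihy
    | smul r x hx ih =>
        rw [map_smul (TensorProduct.map (graftF a) LinearMap.id) r x]
        exact W.smul_mem r ih
  have hassoc : ∀ (a : Ω) (u : TensorProduct ℚ (FV Ω) (FV Ω)) (y : FV Ω),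
      (TensorProduct.assoc ℚ (FV Ω) (FV Ω) (FV Ω))
          ((TensorProduct.map (graftF a) LinearMap.id u) ⊗ₜ[ℚ] y)
        = TensorProduct.map (graftF a) LinearMap.id
            ((TensorProduct.assoc ℚ (FV Ω) (FV Ω) (FV Ω)) (u ⊗ₜ[ℚ] y)) := by
    intro a u y
    induction u using TensorProduct.induction_on with
    | zero => simp
    | tmul p q =>
        simp only [TensorProduct.map_tmul, TensorProduct.assoc_tmul,
          LinearMap.id_coe, id_eq]
    | add u v hu hv =>
        rw [map_add, TensorProduct.add_tmul, map_add, TensorProduct.add_tmul, map_add,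
          map_add, hu, hv]
  have key : ∀ (a : Ω), ∀ z ∈ W,
      (TensorProduct.assoc ℚ (FV Ω) (FV Ω) (FV Ω))
          ((TensorProduct.map ΔL LinearMap.id)
            ((TensorProduct.map (graftF a) LinearMap.id) z))
        = TensorProduct.map (graftF a) LinearMap.id
            ((TensorProduct.assoc ℚ (FV Ω) (FV Ω) (FV Ω))
              ((TensorProduct.map ΔL LinearMap.id) z))
          + e ⊗ₜ[ℚ] (TensorProduct.map (graftF a) LinearMap.id z) := by
    intro a z hz
    induction hz using Submodule.span_induction with
    | mem x hx =>
        obtain ⟨F, y, hF, rfl⟩ := hx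
        simp only [TensorProduct.map_tmul, LinearMap.id_coe, id_eq]
        rw [hgr, hΔLs, hΔtree a F hF, hΔLs, TensorProduct.add_tmul, map_add, hassoc,
          TensorProduct.assoc_tmul]
    | zero => simp only [map_zero, TensorProduct.tmul_zero, add_zero]
    | add x y hx hy ihx ihy =>
        simp only [map_add, TensorProduct.tmul_add]
        rw [ihx, ihy]
        abel
    | smul r x hx ih =>
        simp only [map_smul]
        rw [ih]
        simp only [smul_add, TensorProduct.tmul_smul]
  have mapcomm : ∀ (a : Ω) (z : TensorProduct ℚ (FV Ω) (FV Ω)),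
      TensorProduct.map LinearMap.id ΔL (TensorProduct.map (graftF a) LinearMap.id z)
        = TensorProduct.map (graftF a) LinearMap.id
            (TensorProduct.map LinearMap.id ΔL z) := by
    intro a z
    induction z using TensorProduct.induction_on with
    | zero => simp only [map_zero]
    | tmul p q =>
        simp only [TensorProduct.map_tmul, LinearMap.id_coe, id_eq]
    | add u v hu hv => rw [map_add, map_add, map_add, map_add, hu, hv]
  have hsz : ∀ (a : Ω) (f : RForest Ω), sizeOf f < sizeOf [RTree.node a f] := by
    intro a f
    simp only [List.cons.sizeOf_spec, List.nil.sizeOf_spec, RTree.node.sizeOf_spec]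
    omega
  have main : ∀ n : ℕ, ∀ T : RForest Ω, IsTree T → sizeOf T ≤ n →
      Δ T ∈ W ∧
      (TensorProduct.assoc ℚ (FV Ω) (FV Ω) (FV Ω))
          (TensorProduct.map ΔL LinearMap.id (Δ T))
        = TensorProduct.map LinearMap.id ΔL (Δ T) := by
    intro n
    induction n using Nat.strong_induction_on with
    | _ n IH =>
      intro T hT hle
      match T, hT, hle with
      | [], _, _ =>
        refine ⟨by rw [hΔ0]; exact hWgen _ _ (by simp [IsTree]), ?_⟩
        rw [hΔ0]
        simp only [TensorProduct.map_tmul, LinearMap.id_coe, id_eq]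
        rw [hΔLs, hΔ0, TensorProduct.assoc_tmul]
      | [RTree.node a f], hT, hle =>
        by_cases hf : IsTree f
        · have hfs : sizeOf f < n := lt_of_lt_of_le (hsz a f) hle
          obtain ⟨hfW, hfC⟩ := IH (sizeOf f) hfs f hf le_rfl
          rw [hΔtree a f hf]
          refine ⟨W.add_mem (hWB a _ hfW) (hWgen _ _ (by simp [IsTree])), ?_⟩
          have t2 : (TensorProduct.assoc ℚ (FV Ω) (FV Ω) (FV Ω))
              (TensorProduct.map ΔL LinearMap.id
                (e ⊗ₜ[ℚ] Finsupp.single [RTree.node a f] 1))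
              = e ⊗ₜ[ℚ] (e ⊗ₜ[ℚ] Finsupp.single [RTree.node a f] 1) := by
            simp only [TensorProduct.map_tmul, LinearMap.id_coe, id_eq, he]
            rw [hΔLs, hΔ0, TensorProduct.assoc_tmul]
          have t2' : TensorProduct.map LinearMap.id ΔL
                (e ⊗ₜ[ℚ] Finsupp.single [RTree.node a f] 1)
              = e ⊗ₜ[ℚ] (TensorProduct.map (graftF a) LinearMap.id (Δ f))
                + e ⊗ₜ[ℚ] (e ⊗ₜ[ℚ] Finsupp.single [RTree.node a f] 1) := by
            simp only [TensorProduct.map_tmul, LinearMap.id_coe, id_eq]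
            rw [hΔLs, hΔtree a f hf, TensorProduct.tmul_add]
          rw [map_add, map_add, map_add, key a _ hfW, hfC, t2, t2', mapcomm]
          abel
        · have h2 : 2 ≤ f.length := by
            simp only [IsTree, not_le] at hf
            omega
          rw [hΔforest a f h2]
          refine ⟨hWgen _ _ (by simp [IsTree]), ?_⟩
          simp only [TensorProduct.map_tmul, LinearMap.id_coe, id_eq]
          rw [hΔLs, hΔ0, TensorProduct.assoc_tmul, hΔLs, hΔforest a f h2]
      | (_ :: _ :: _), hT, _ => simp [IsTree] at hT
  intro T hT
  exact (main (sizeOf T) T hT le_rfl).2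
end

section
/- For all λ ∈ K and all rooted trees T, T', the deconcatenation coproduct Δ is a morphism for the λ-shuffle product: Δ(T ⧢_λ T') = (⧢_λ ⊗ ⧢_λ) ∘ τ₂₃ ∘ (Δ ⊗ Δ)(T ⊗ T'), where τ₂₃ swaps the middle two tensor factors. Consequently (T_Ω, ⧢_λ, Δ) is a (commutative, non-associative, coassociative) bialgebra. -/
/-- Linear map reinserting a shuffled tree at position `i` of `F`, together with
the remaining trees of `F` and of `F'` (with the `j`-th removed). -/
noncomputable def embedF {Ω : Type} (F F' : RForest Ω) (i j : ℕ) : FV Ω →ₗ[ℚ] FV Ω :=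
  Finsupp.lmapDomain ℚ ℚ (fun G => F.take i ++ G ++ F.drop (i + 1) ++ F'.eraseIdx j)

set_option linter.unusedSectionVars false
section Aux
variable {Ω : Type} [CommSemigroup Ω] (lam : ℚ)
variable (sh : RForest Ω → RForest Ω → FV Ω)
variable (shLin : FV Ω →ₗ[ℚ] FV Ω →ₗ[ℚ] FV Ω)
variable (hshLin : shLin = (Finsupp.lift (FV Ω →ₗ[ℚ] FV Ω) ℚ (RForest Ω))
      (fun F => (Finsupp.lift (FV Ω) ℚ (RForest Ω)) (sh F)))

include hshLin in
lemma shLin_single_single (F F' : RForest Ω) :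
    shLin (Finsupp.single F 1) (Finsupp.single F' 1) = sh F F' := by
  subst hshLin
  simp [Finsupp.lift_apply, Finsupp.sum_single_index]

lemma graftF_single (a : Ω) (F : RForest Ω) (c : ℚ) :
    graftF a (Finsupp.single F c) = Finsupp.single [RTree.node a F] c := by
  simp [graftF, Finsupp.lmapDomain_apply, Finsupp.mapDomain_single]

end Aux

section Aux2
set_option linter.unusedSectionVars false
variable {Ω : Type} [CommSemigroup Ω] (lam : ℚ)
variable (sh : RForest Ω → RForest Ω → FV Ω)
variable (shLin : FV Ω →ₗ[ℚ] FV Ω →ₗ[ℚ] FV Ω)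
variable (hshLin : shLin = (Finsupp.lift (FV Ω →ₗ[ℚ] FV Ω) ℚ (RForest Ω))
      (fun F => (Finsupp.lift (FV Ω) ℚ (RForest Ω)) (sh F)))
variable (h0l : ∀ F : RForest Ω, sh [] F = Finsupp.single F 1)
variable (h0r : ∀ F : RForest Ω, sh F [] = Finsupp.single F 1)
variable (htree : ∀ (a a' : Ω) (f f' : RForest Ω),
      sh [RTree.node a f] [RTree.node a' f'] =
        graftF a (sh f [RTree.node a' f']) + graftF a' (sh [RTree.node a f] f')
          + lam • graftF (a * a') (sh f f'))

include hshLin in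
lemma shLin_single_smul (F F' : RForest Ω) (c d : ℚ) :
    shLin (Finsupp.single F c) (Finsupp.single F' d) = (c * d) • sh F F' := by
  have h1 : (Finsupp.single F c : FV Ω) = c • Finsupp.single F 1 := by
    simp [Finsupp.smul_single]
  have h2 : (Finsupp.single F' d : FV Ω) = d • Finsupp.single F' 1 := by
    simp [Finsupp.smul_single]
  rw [h1, h2, map_smul, map_smul, LinearMap.smul_apply,
    shLin_single_single sh shLin hshLin, smul_smul, mul_comm d c]

include hshLin h0l in
lemma shLin_e_left : shLin (Finsupp.single ([] : RForest Ω) 1) = LinearMap.id := by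
  apply Finsupp.lhom_ext'
  intro F
  apply LinearMap.ext; intro c
  simp only [LinearMap.comp_apply, Finsupp.lsingle_apply, LinearMap.id_apply]
  have : (Finsupp.single F c : FV Ω) = c • Finsupp.single F 1 := by simp
  rw [this, map_smul, shLin_single_single sh shLin hshLin, h0l]

include hshLin h0r in
lemma shLin_e_right (x : FV Ω) : shLin x (Finsupp.single ([] : RForest Ω) 1) = x := by
  have : shLin.flip (Finsupp.single ([] : RForest Ω) 1) = LinearMap.id := by
    apply Finsupp.lhom_ext'
    intro F
    apply LinearMap.ext; intro c
    simp only [LinearMap.comp_apply, Finsupp.lsingle_apply, LinearMap.id_apply,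
      LinearMap.flip_apply]
    have : (Finsupp.single F c : FV Ω) = c • Finsupp.single F 1 := by simp
    rw [this, map_smul, LinearMap.smul_apply, shLin_single_single sh shLin hshLin, h0r]
  calc shLin x (Finsupp.single ([] : RForest Ω) 1)
      = shLin.flip (Finsupp.single ([] : RForest Ω) 1) x := rfl
    _ = x := by rw [this]; rfl

include hshLin htree in
lemma shLin_graft (a a' : Ω) (x y : FV Ω) :
    shLin (graftF a x) (graftF a' y) =
      graftF a (shLin x (graftF a' y)) + graftF a' (shLin (graftF a x) y)
        + lam • graftF (a * a') (shLin x y) := by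
  induction x using Finsupp.induction_linear with
  | zero => simp
  | add f g hf hg =>
      simp only [map_add, LinearMap.add_apply, hf, hg]
      module
  | single F c =>
      induction y using Finsupp.induction_linear with
      | zero => simp
      | add f g hf hg =>
          simp only [map_add, LinearMap.add_apply, hf, hg]
          module
      | single F' d =>
          rw [graftF_single, graftF_single, shLin_single_smul sh shLin hshLin,
            shLin_single_smul sh shLin hshLin, shLin_single_smul sh shLin hshLin,
            shLin_single_smul sh shLin hshLin,
            htree, map_smul, map_smul, map_smul]
          module
end Aux2

section Aux3
set_option linter.unusedSectionVars false
variable {Ω : Type} [CommSemigroup Ω] (lam : ℚ)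
variable (Δ : RForest Ω → TensorProduct ℚ (FV Ω) (FV Ω))
variable (ΔL : FV Ω →ₗ[ℚ] TensorProduct ℚ (FV Ω) (FV Ω))
variable (hΔL : ΔL = (Finsupp.lift (TensorProduct ℚ (FV Ω) (FV Ω)) ℚ (RForest Ω)) Δ)
variable (hΔtree : ∀ (a : Ω) (t : RForest Ω), IsTree t →
      Δ [RTree.node a t] =
        TensorProduct.map (graftF a) LinearMap.id (Δ t)
          + Finsupp.single [] 1 ⊗ₜ[ℚ] Finsupp.single [RTree.node a t] 1)
variable (hΔforest : ∀ (a : Ω) (f : RForest Ω), 2 ≤ f.length →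
      Δ [RTree.node a f] = Finsupp.single [] 1 ⊗ₜ[ℚ] Finsupp.single [RTree.node a f] 1)

include hΔL in
lemma DL_single (F : RForest Ω) (c : ℚ) : ΔL (Finsupp.single F c) = c • Δ F := by
  subst hΔL
  simp [Finsupp.lift_apply, Finsupp.sum_single_index]

include hΔL hΔtree in
lemma DL_graft_tree (a : Ω) (x : FV Ω) (hx : ∀ F ∈ x.support, IsTree F) :
    ΔL (graftF a x) =
      TensorProduct.map (graftF a) LinearMap.id (ΔL x)
        + Finsupp.single ([] : RForest Ω) (1:ℚ) ⊗ₜ[ℚ] graftF a x := by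
  induction x using Finsupp.induction with
  | zero => simp
  | single_add F c y hFy hc ih =>
      have hmemF : F ∈ (Finsupp.single F c + y).support := by
        simp [Finsupp.mem_support_iff, Finsupp.notMem_support_iff.mp hFy, hc]
      have hmemy : ∀ G ∈ y.support, G ∈ (Finsupp.single F c + y).support := by
        intro G hG
        have hGF : F ≠ G := fun h => hFy (h ▸ hG)
        simp only [Finsupp.mem_support_iff] at hG ⊢
        rw [Finsupp.add_apply, Finsupp.single_eq_of_ne hGF.symm, zero_add]
        exact hG
      have hF : IsTree F := hx F hmemF
      have hy : ∀ G ∈ y.support, IsTree G := fun G hG => hx G (hmemy G hG)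
      simp only [map_add, graftF_single, ih hy, DL_single Δ ΔL hΔL,
        hΔtree a F hF, TensorProduct.tmul_add, map_smul, TensorProduct.tmul_smul,
        map_add]
      rw [show (Finsupp.single [RTree.node a F] c : FV Ω)
          = c • Finsupp.single [RTree.node a F] 1 by simp]
      simp only [TensorProduct.tmul_add, TensorProduct.tmul_smul]
      module

include hΔL hΔforest in
lemma DL_graft_big (a : Ω) (x : FV Ω) (hx : ∀ F ∈ x.support, 2 ≤ F.length) :
    ΔL (graftF a x) = Finsupp.single ([] : RForest Ω) (1:ℚ) ⊗ₜ[ℚ] graftF a x := by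
  induction x using Finsupp.induction with
  | zero => simp
  | single_add F c y hFy hc ih =>
      have hmemF : F ∈ (Finsupp.single F c + y).support := by
        simp [Finsupp.mem_support_iff, Finsupp.notMem_support_iff.mp hFy, hc]
      have hmemy : ∀ G ∈ y.support, G ∈ (Finsupp.single F c + y).support := by
        intro G hG
        have hGF : F ≠ G := fun h => hFy (h ▸ hG)
        simp only [Finsupp.mem_support_iff] at hG ⊢
        rw [Finsupp.add_apply, Finsupp.single_eq_of_ne hGF.symm, zero_add]
        exact hG
      have hF : 2 ≤ F.length := hx F hmemF
      have hy : ∀ G ∈ y.support, 2 ≤ G.length := fun G hG => hx G (hmemy G hG)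
      simp only [map_add, graftF_single, ih hy, DL_single Δ ΔL hΔL,
        hΔforest a F hF, TensorProduct.tmul_add, TensorProduct.tmul_smul]
      rw [show (Finsupp.single [RTree.node a F] c : FV Ω)
          = c • Finsupp.single [RTree.node a F] 1 by simp, TensorProduct.tmul_smul]
end Aux3

section Aux4
set_option linter.unusedSectionVars false
variable {Ω : Type} [CommSemigroup Ω] (lam : ℚ)
variable (sh : RForest Ω → RForest Ω → FV Ω)
variable (shLin : FV Ω →ₗ[ℚ] FV Ω →ₗ[ℚ] FV Ω)
variable (hshLin : shLin = (Finsupp.lift (FV Ω →ₗ[ℚ] FV Ω) ℚ (RForest Ω))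
      (fun F => (Finsupp.lift (FV Ω) ℚ (RForest Ω)) (sh F)))
variable (h0l : ∀ F : RForest Ω, sh [] F = Finsupp.single F 1)
variable (h0r : ∀ F : RForest Ω, sh F [] = Finsupp.single F 1)
variable (htree : ∀ (a a' : Ω) (f f' : RForest Ω),
      sh [RTree.node a f] [RTree.node a' f'] =
        graftF a (sh f [RTree.node a' f']) + graftF a' (sh [RTree.node a f] f')
          + lam • graftF (a * a') (sh f f'))
variable (hforest : ∀ F F' : RForest Ω, F ≠ [] → F' ≠ [] → 3 ≤ F.length + F'.length →
      sh F F' = ((F.length * F'.length : ℚ))⁻¹ •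
        ∑ i : Fin F.length, ∑ j : Fin F'.length,
          embedF F F' i j (sh [F.get i] [F'.get j]))

lemma graft_supp (a : Ω) (x : FV Ω) (G : RForest Ω) (hG : G ∈ (graftF a x).support) :
    G.length = 1 := by
  classical
  have := Finsupp.mapDomain_support (f := fun F => [RTree.node a F]) (s := x)
  rw [graftF] at hG
  simp only [Finsupp.lmapDomain_apply] at hG
  obtain ⟨F, _, rfl⟩ := Finset.mem_image.mp (this hG)
  rfl

include htree in
lemma sh_tt_supp (t t' : RTree Ω) (G : RForest Ω) (hG : G ∈ (sh [t] [t']).support) :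
    G.length = 1 := by
  classical
  obtain ⟨a, f⟩ := t
  obtain ⟨a', f'⟩ := t'
  rw [htree] at hG
  have h1 := Finsupp.support_add (g₁ := graftF a (sh f [RTree.node a' f'])
      + graftF a' (sh [RTree.node a f] f')) (g₂ := lam • graftF (a * a') (sh f f')) hG
  rcases Finset.mem_union.mp h1 with h2 | h2
  · rcases Finset.mem_union.mp (Finsupp.support_add h2) with h3 | h3
    · exact graft_supp _ _ _ h3
    · exact graft_supp _ _ _ h3
  · exact graft_supp _ _ _ (Finsupp.support_smul h2)

include h0l h0r htree in
lemma sh_tree_supp (T T' : RForest Ω) (hT : IsTree T) (hT' : IsTree T')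
    (G : RForest Ω) (hG : G ∈ (sh T T').support) : IsTree G := by
  match T, T' with
  | [], T' =>
      rw [h0l] at hG
      have := Finsupp.support_single_subset hG
      simp only [Finset.mem_singleton] at this
      exact this ▸ hT'
  | T, [] =>
      rw [h0r] at hG
      have := Finsupp.support_single_subset hG
      simp only [Finset.mem_singleton] at this
      exact this ▸ hT
  | [t], [t'] =>
      have := sh_tt_supp lam sh htree t t' G hG
      simp [IsTree, this]
  | t :: s :: r, _ => simp [IsTree] at hT
  | _, t :: s :: r => simp [IsTree] at hT'

lemma embed_supp (F F' : RForest Ω) (i j : ℕ) (hi : i < F.length) (hj : j < F'.length)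
    (z : FV Ω) (hz : ∀ G ∈ z.support, G.length = 1)
    (G : RForest Ω) (hG : G ∈ (embedF F F' i j z).support) :
    G.length = F.length + F'.length - 1 := by
  classical
  have := Finsupp.mapDomain_support
    (f := fun G => F.take i ++ G ++ F.drop (i + 1) ++ F'.eraseIdx j) (s := z)
  rw [embedF] at hG
  simp only [Finsupp.lmapDomain_apply] at hG
  obtain ⟨G0, hG0, rfl⟩ := Finset.mem_image.mp (this hG)
  have h0 : G0.length = 1 := hz G0 hG0
  simp only [List.length_append, List.length_take, List.length_drop, h0]
  simp only [List.length_eraseIdx, hj, if_pos, min_eq_left hi.le]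
  omega

include htree hforest in
lemma sh_big_supp (F F' : RForest Ω) (hF : F ≠ []) (hF' : F' ≠ [])
    (hlen : 3 ≤ F.length + F'.length)
    (G : RForest Ω) (hG : G ∈ (sh F F').support) : 2 ≤ G.length := by
  classical
  rw [hforest F F' hF hF' hlen] at hG
  have h1 := Finsupp.support_smul hG
  have h2 : ∃ i : Fin F.length, G ∈ (∑ j : Fin F'.length,
      embedF F F' i j (sh [F.get i] [F'.get j])).support := by
    by_contra hcon
    push_neg at hcon
    simp only [Finsupp.notMem_support_iff] at hcon
    rw [Finsupp.mem_support_iff, Finsupp.finset_sum_apply] at h1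
    exact h1 (Finset.sum_eq_zero fun i _ => hcon i)
  obtain ⟨i, h3⟩ := h2
  have h4 : ∃ j : Fin F'.length, G ∈ (embedF F F' i j (sh [F.get i] [F'.get j])).support := by
    by_contra hcon
    push_neg at hcon
    simp only [Finsupp.notMem_support_iff] at hcon
    rw [Finsupp.mem_support_iff, Finsupp.finset_sum_apply] at h3
    exact h3 (Finset.sum_eq_zero fun j _ => hcon j)
  obtain ⟨j, h5⟩ := h4
  have := embed_supp F F' i j i.isLt j.isLt _
    (fun G hG => sh_tt_supp lam sh htree _ _ G hG) G h5
  omega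
end Aux4

section Aux5
set_option linter.unusedSectionVars false
variable {Ω : Type} [CommSemigroup Ω] (lam : ℚ)
variable (sh : RForest Ω → RForest Ω → FV Ω)
variable (shLin : FV Ω →ₗ[ℚ] FV Ω →ₗ[ℚ] FV Ω)
variable (hshLin : shLin = (Finsupp.lift (FV Ω →ₗ[ℚ] FV Ω) ℚ (RForest Ω))
      (fun F => (Finsupp.lift (FV Ω) ℚ (RForest Ω)) (sh F)))
variable (h0l : ∀ F : RForest Ω, sh [] F = Finsupp.single F 1)
variable (h0r : ∀ F : RForest Ω, sh F [] = Finsupp.single F 1)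
variable (htree : ∀ (a a' : Ω) (f f' : RForest Ω),
      sh [RTree.node a f] [RTree.node a' f'] =
        graftF a (sh f [RTree.node a' f']) + graftF a' (sh [RTree.node a f] f')
          + lam • graftF (a * a') (sh f f'))

include hshLin h0l in
lemma M_ee_left (v : TensorProduct ℚ (FV Ω) (FV Ω)) :
    TensorProduct.map₂ shLin shLin
      ((Finsupp.single ([] : RForest Ω) (1:ℚ)) ⊗ₜ[ℚ] (Finsupp.single ([] : RForest Ω) (1:ℚ))) v
      = v := by
  rw [TensorProduct.map₂_apply_tmul, shLin_e_left sh shLin hshLin h0l, TensorProduct.map_id,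
    LinearMap.id_apply]

include hshLin h0l in
lemma M_e_left (w : FV Ω) (v : TensorProduct ℚ (FV Ω) (FV Ω)) :
    TensorProduct.map₂ shLin shLin
      ((Finsupp.single ([] : RForest Ω) (1:ℚ)) ⊗ₜ[ℚ] w) v
      = TensorProduct.map LinearMap.id (shLin w) v := by
  rw [TensorProduct.map₂_apply_tmul, shLin_e_left sh shLin hshLin h0l]

include hshLin h0r in
lemma M_ee_right (u : TensorProduct ℚ (FV Ω) (FV Ω)) :
    TensorProduct.map₂ shLin shLin u
      ((Finsupp.single ([] : RForest Ω) (1:ℚ)) ⊗ₜ[ℚ] (Finsupp.single ([] : RForest Ω) (1:ℚ)))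
      = u := by
  induction u using TensorProduct.induction_on with
  | zero => simp
  | tmul x y =>
      rw [TensorProduct.map₂_apply_tmul, TensorProduct.map_tmul,
        shLin_e_right sh shLin hshLin h0r, shLin_e_right sh shLin hshLin h0r]
  | add u v hu hv => rw [map_add, LinearMap.add_apply, hu, hv]

include hshLin h0r in
lemma M_e_right (w : FV Ω) (u : TensorProduct ℚ (FV Ω) (FV Ω)) :
    TensorProduct.map₂ shLin shLin u
      ((Finsupp.single ([] : RForest Ω) (1:ℚ)) ⊗ₜ[ℚ] w)
      = TensorProduct.map LinearMap.id (shLin.flip w) u := by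
  induction u using TensorProduct.induction_on with
  | zero => simp
  | tmul x y =>
      rw [TensorProduct.map₂_apply_tmul, TensorProduct.map_tmul, TensorProduct.map_tmul,
        shLin_e_right sh shLin hshLin h0r, LinearMap.id_apply, LinearMap.flip_apply]
  | add u v hu hv => rw [map_add, LinearMap.add_apply, hu, hv, map_add]

include hshLin htree in
lemma M_graft_graft (a a' : Ω) (u v : TensorProduct ℚ (FV Ω) (FV Ω)) :
    TensorProduct.map₂ shLin shLin
        (TensorProduct.map (graftF a) LinearMap.id u)
        (TensorProduct.map (graftF a') LinearMap.id v)
      = TensorProduct.map (graftF a) LinearMap.id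
          (TensorProduct.map₂ shLin shLin u (TensorProduct.map (graftF a') LinearMap.id v))
        + TensorProduct.map (graftF a') LinearMap.id
          (TensorProduct.map₂ shLin shLin (TensorProduct.map (graftF a) LinearMap.id u) v)
        + lam • TensorProduct.map (graftF (a * a')) LinearMap.id
          (TensorProduct.map₂ shLin shLin u v) := by
  induction u using TensorProduct.induction_on with
  | zero => simp
  | add u1 u2 h1 h2 =>
      simp only [map_add, LinearMap.add_apply, h1, h2]
      module
  | tmul x y =>
      induction v using TensorProduct.induction_on with
      | zero => simp
      | add v1 v2 h1 h2 =>
          simp only [map_add, LinearMap.add_apply, h1, h2]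
          module
      | tmul x' y' =>
          simp only [TensorProduct.map_tmul, TensorProduct.map₂_apply_tmul,
            LinearMap.id_apply]
          rw [shLin_graft lam sh shLin hshLin htree a a' x x']
          simp only [TensorProduct.add_tmul, TensorProduct.smul_tmul']
end Aux5

lemma map_comm_aux {Ω : Type} (p q : FV Ω →ₗ[ℚ] FV Ω) (u : TensorProduct ℚ (FV Ω) (FV Ω)) :
    TensorProduct.map p LinearMap.id (TensorProduct.map LinearMap.id q u)
      = TensorProduct.map LinearMap.id q (TensorProduct.map p LinearMap.id u) := by
  rw [← LinearMap.comp_apply, ← TensorProduct.map_comp, ← LinearMap.comp_apply,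
    ← TensorProduct.map_comp]
  simp

lemma forest_sizeOf_pos {Ω : Type} (F : RForest Ω) : 0 < sizeOf F := by
  cases F <;> simp

lemma sizeOf_inner_lt {Ω : Type} (a : Ω) (f : RForest Ω) :
    sizeOf f < sizeOf ([RTree.node a f] : RForest Ω) := by
  simp
  omega


set_option maxHeartbeats 1000000 in
/-- for every `λ` and all rooted trees `T, T'`, the deconcatenation
coproduct is a morphism for the λ-shuffle product:
`Δ(T ⧢_λ T') = (⧢_λ ⊗ ⧢_λ) ∘ τ₂₃ ∘ (Δ ⊗ Δ)(T ⊗ T')`, so that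
`(T_Ω, ⧢_λ, Δ)` is a bialgebra.  Here `sh` is the λ-shuffle of rooted forests
(over a commutative semigroup `Ω`), `shLin` its bilinear extension, `Δ` the
coproduct and `ΔL` its linear extension; `TensorProduct.map₂ shLin shLin`
is exactly `(⧢_λ ⊗ ⧢_λ) ∘ τ₂₃`. -/
theorem coprod_is_shuffle_morphism {Ω : Type} [CommSemigroup Ω] (lam : ℚ)
    (sh : RForest Ω → RForest Ω → FV Ω)
    (h0l : ∀ F, sh [] F = Finsupp.single F 1)
    (h0r : ∀ F, sh F [] = Finsupp.single F 1)
    (htree : ∀ (a a' : Ω) (f f' : RForest Ω),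
      sh [RTree.node a f] [RTree.node a' f'] =
        graftF a (sh f [RTree.node a' f']) + graftF a' (sh [RTree.node a f] f')
          + lam • graftF (a * a') (sh f f'))
    (hforest : ∀ F F' : RForest Ω, F ≠ [] → F' ≠ [] → 3 ≤ F.length + F'.length →
      sh F F' = ((F.length * F'.length : ℚ))⁻¹ •
        ∑ i : Fin F.length, ∑ j : Fin F'.length,
          embedF F F' i j (sh [F.get i] [F'.get j]))
    (shLin : FV Ω →ₗ[ℚ] FV Ω →ₗ[ℚ] FV Ω)
    (hshLin : shLin = (Finsupp.lift (FV Ω →ₗ[ℚ] FV Ω) ℚ (RForest Ω))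
      (fun F => (Finsupp.lift (FV Ω) ℚ (RForest Ω)) (sh F)))
    (Δ : RForest Ω → TensorProduct ℚ (FV Ω) (FV Ω))
    (hΔ0 : Δ [] = Finsupp.single [] 1 ⊗ₜ[ℚ] Finsupp.single [] 1)
    (hΔtree : ∀ (a : Ω) (t : RForest Ω), IsTree t →
      Δ [RTree.node a t] =
        TensorProduct.map (graftF a) LinearMap.id (Δ t)
          + Finsupp.single [] 1 ⊗ₜ[ℚ] Finsupp.single [RTree.node a t] 1)
    (hΔforest : ∀ (a : Ω) (f : RForest Ω), 2 ≤ f.length →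
      Δ [RTree.node a f] = Finsupp.single [] 1 ⊗ₜ[ℚ] Finsupp.single [RTree.node a f] 1)
    (ΔL : FV Ω →ₗ[ℚ] TensorProduct ℚ (FV Ω) (FV Ω))
    (hΔL : ΔL = (Finsupp.lift (TensorProduct ℚ (FV Ω) (FV Ω)) ℚ (RForest Ω)) Δ) :
    ∀ T T' : RForest Ω, IsTree T → IsTree T' →
      ΔL (sh T T') = TensorProduct.map₂ shLin shLin (Δ T) (Δ T') := by
  have hDL1 : ∀ F : RForest Ω, ΔL (Finsupp.single F 1) = Δ F := by
    intro F; rw [DL_single Δ ΔL hΔL, one_smul]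
  suffices H : ∀ n : ℕ, ∀ T T' : RForest Ω, sizeOf T + sizeOf T' ≤ n → IsTree T → IsTree T' →
      ΔL (sh T T') = TensorProduct.map₂ shLin shLin (Δ T) (Δ T') by
    exact fun T T' hT hT' => H _ T T' le_rfl hT hT'
  intro n
  induction n with
  | zero =>
      intro T T' hle _ _
      have := forest_sizeOf_pos T
      have := forest_sizeOf_pos T'
      omega
  | succ n ih =>
      intro T T' hle hT hT'
      match T, T' with
      | [], T' =>
          rw [h0l, hDL1, hΔ0, M_ee_left sh shLin hshLin h0l]
      | T, [] =>
          rw [h0r, hDL1, hΔ0, M_ee_right sh shLin hshLin h0r]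
      | [RTree.node a f], [RTree.node a' f'] =>
          -- abbreviations
          have hTt' : IsTree [RTree.node a' f'] := by simp [IsTree]
          have hTt : IsTree [RTree.node a f] := by simp [IsTree]
          have hszf : sizeOf f + sizeOf ([RTree.node a' f'] : RForest Ω) ≤ n := by
            have := sizeOf_inner_lt a f; omega
          have hszf' : sizeOf ([RTree.node a f] : RForest Ω) + sizeOf f' ≤ n := by
            have := sizeOf_inner_lt a' f'; omega
          have hszff' : sizeOf f + sizeOf f' ≤ n := by
            have := sizeOf_inner_lt a f; have := sizeOf_inner_lt a' f'; omega
          rw [htree a a' f f', map_add, map_add, map_smul]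
          by_cases hf : IsTree f <;> by_cases hf' : IsTree f'
          · -- Case A : both trees
            rw [DL_graft_tree Δ ΔL hΔL hΔtree a _
                (sh_tree_supp lam sh h0l h0r htree f _ hf hTt'),
              DL_graft_tree Δ ΔL hΔL hΔtree a' _
                (sh_tree_supp lam sh h0l h0r htree _ f' hTt hf'),
              DL_graft_tree Δ ΔL hΔL hΔtree (a * a') _
                (sh_tree_supp lam sh h0l h0r htree f f' hf hf'),
              ih f _ hszf hf hTt', ih _ f' hszf' hTt hf', ih f f' hszff' hf hf',
              hΔtree a f hf, hΔtree a' f' hf']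
            -- expand bilinearity on both sides
            simp only [map_add, LinearMap.add_apply, TensorProduct.tmul_add]
            rw [M_graft_graft lam sh shLin hshLin htree a a' (Δ f) (Δ f'),
              M_e_right sh shLin hshLin h0r, M_e_right sh shLin hshLin h0r,
              M_e_left sh shLin hshLin h0l, M_e_left sh shLin hshLin h0l,
              TensorProduct.map₂_apply_tmul, TensorProduct.map_tmul,
              shLin_e_right sh shLin hshLin h0r,
              shLin_single_single sh shLin hshLin, htree a a' f f',
              map_comm_aux (graftF a), map_comm_aux (graftF a'),
              TensorProduct.tmul_add, TensorProduct.tmul_add, TensorProduct.tmul_smul]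
            module
          · -- Case C : f tree, f' big
            have hlf' : 2 ≤ f'.length := by simp [IsTree] at hf'; omega
            have hf'ne : f' ≠ [] := by cases f' <;> simp_all
            rw [DL_graft_tree Δ ΔL hΔL hΔtree a _
                (sh_tree_supp lam sh h0l h0r htree f _ hf hTt'),
              ih f _ hszf hf hTt',
              DL_graft_big Δ ΔL hΔL hΔforest a' _
                (sh_big_supp lam sh htree hforest _ f' (by simp) hf'ne (by simp; omega)),
              hΔtree a f hf, hΔforest a' f' hlf']
            have h3 : ΔL (graftF (a * a') (sh f f')) =
                Finsupp.single ([] : RForest Ω) (1:ℚ) ⊗ₜ[ℚ] graftF (a * a') (sh f f') := by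
              match f, hf with
              | [], _ =>
                  rw [h0l]
                  refine DL_graft_big Δ ΔL hΔL hΔforest _ _ ?_
                  intro G hG
                  have := Finsupp.support_single_subset hG
                  simp only [Finset.mem_singleton] at this
                  exact this ▸ hlf'
              | [t], _ =>
                  exact DL_graft_big Δ ΔL hΔL hΔforest _ _
                    (sh_big_supp lam sh htree hforest [t] f' (by simp) hf'ne (by simp; omega))
            rw [h3]
            rw [M_e_right sh shLin hshLin h0r, M_e_right sh shLin hshLin h0r]
            simp only [map_add, LinearMap.add_apply, TensorProduct.tmul_add]
            rw [TensorProduct.map_tmul,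
              LinearMap.id_apply, LinearMap.flip_apply,
              shLin_single_single sh shLin hshLin, htree a a' f f',
              map_comm_aux (graftF a),
              TensorProduct.tmul_add, TensorProduct.tmul_add, TensorProduct.tmul_smul]
            module
          · -- Case B : f big, f' tree
            have hlf : 2 ≤ f.length := by simp [IsTree] at hf; omega
            have hfne : f ≠ [] := by cases f <;> simp_all
            rw [DL_graft_big Δ ΔL hΔL hΔforest a _
                (sh_big_supp lam sh htree hforest f _ hfne (by simp) (by simp; omega)),
              DL_graft_tree Δ ΔL hΔL hΔtree a' _
                (sh_tree_supp lam sh h0l h0r htree _ f' hTt hf'),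
              ih _ f' hszf' hTt hf',
              hΔforest a f hlf, hΔtree a' f' hf']
            have h3 : ΔL (graftF (a * a') (sh f f')) =
                Finsupp.single ([] : RForest Ω) (1:ℚ) ⊗ₜ[ℚ] graftF (a * a') (sh f f') := by
              match f', hf' with
              | [], _ =>
                  rw [h0r]
                  refine DL_graft_big Δ ΔL hΔL hΔforest _ _ ?_
                  intro G hG
                  have := Finsupp.support_single_subset hG
                  simp only [Finset.mem_singleton] at this
                  exact this ▸ hlf
              | [t'], _ =>
                  exact DL_graft_big Δ ΔL hΔL hΔforest _ _
                    (sh_big_supp lam sh htree hforest f [t'] hfne (by simp) (by simp; omega))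
            rw [h3]
            rw [M_e_left sh shLin hshLin h0l, M_e_left sh shLin hshLin h0l]
            simp only [map_add, LinearMap.add_apply, TensorProduct.tmul_add]
            rw [TensorProduct.map_tmul,
              LinearMap.id_apply,
              shLin_single_single sh shLin hshLin, htree a a' f f',
              map_comm_aux (graftF a'),
              TensorProduct.tmul_add, TensorProduct.tmul_add, TensorProduct.tmul_smul]
            module
          · -- Case D : both big
            have hlf : 2 ≤ f.length := by simp [IsTree] at hf; omega
            have hlf' : 2 ≤ f'.length := by simp [IsTree] at hf'; omega
            have hfne : f ≠ [] := by cases f <;> simp_all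
            have hf'ne : f' ≠ [] := by cases f' <;> simp_all
            rw [DL_graft_big Δ ΔL hΔL hΔforest a _
                (sh_big_supp lam sh htree hforest f _ hfne (by simp) (by simp; omega)),
              DL_graft_big Δ ΔL hΔL hΔforest a' _
                (sh_big_supp lam sh htree hforest _ f' (by simp) hf'ne (by simp; omega)),
              DL_graft_big Δ ΔL hΔL hΔforest (a * a') _
                (sh_big_supp lam sh htree hforest f f' hfne hf'ne (by omega)),
              hΔforest a f hlf, hΔforest a' f' hlf']
            rw [TensorProduct.map₂_apply_tmul, TensorProduct.map_tmul,
              shLin_e_right sh shLin hshLin h0r,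
              shLin_single_single sh shLin hshLin, htree a a' f f',
              TensorProduct.tmul_add, TensorProduct.tmul_add, TensorProduct.tmul_smul]
end

section
/- There is no linear map S : T_Ω → T_Ω making (T_Ω, ⧢, Δ, ε) into a Hopf algebra, i.e. satisfying both ⧢ ∘ (Id ⊗ S) ∘ Δ = η ∘ ε and ⧢ ∘ (S ⊗ Id) ∘ Δ = η ∘ ε, where η sends 1 to ∅. -/
open scoped Classical in
/-- no linear map `S` makes `(T_Ω, ⧢, Δ, ε)` a Hopf algebra: the
two antipode identities `⧢ ∘ (Id ⊗ S) ∘ Δ = η ∘ ε` and `⧢ ∘ (S ⊗ Id) ∘ Δ = η ∘ ε`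
cannot both hold on rooted trees.  `sh` is the (λ = 0) shuffle of rooted
forests, `shLin` its bilinear extension, `Δ` the deconcatenation coproduct, the
counit is `ε(T) = if T = ∅ then 1 else 0` and `η(1) = ∅`. -/
theorem no_antipode {Ω : Type} [Nonempty Ω]
    (sh : RForest Ω → RForest Ω → FV Ω)
    (h0l : ∀ F, sh [] F = Finsupp.single F 1)
    (h0r : ∀ F, sh F [] = Finsupp.single F 1)
    (htree : ∀ (a a' : Ω) (f f' : RForest Ω),
      sh [RTree.node a f] [RTree.node a' f'] =
        graftF a (sh f [RTree.node a' f']) + graftF a' (sh [RTree.node a f] f'))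
    (hforest : ∀ F F' : RForest Ω, F ≠ [] → F' ≠ [] → 3 ≤ F.length + F'.length →
      sh F F' = ((F.length * F'.length : ℚ))⁻¹ •
        ∑ i : Fin F.length, ∑ j : Fin F'.length,
          embedF F F' i j (sh [F.get i] [F'.get j]))
    (shLin : FV Ω →ₗ[ℚ] FV Ω →ₗ[ℚ] FV Ω)
    (hshLin : shLin = (Finsupp.lift (FV Ω →ₗ[ℚ] FV Ω) ℚ (RForest Ω))
      (fun F => (Finsupp.lift (FV Ω) ℚ (RForest Ω)) (sh F)))
    (Δ : RForest Ω → TensorProduct ℚ (FV Ω) (FV Ω))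
    (hΔ0 : Δ [] = Finsupp.single [] 1 ⊗ₜ[ℚ] Finsupp.single [] 1)
    (hΔtree : ∀ (a : Ω) (t : RForest Ω), IsTree t →
      Δ [RTree.node a t] =
        TensorProduct.map (graftF a) LinearMap.id (Δ t)
          + Finsupp.single [] 1 ⊗ₜ[ℚ] Finsupp.single [RTree.node a t] 1)
    (hΔforest : ∀ (a : Ω) (f : RForest Ω), 2 ≤ f.length →
      Δ [RTree.node a f] = Finsupp.single [] 1 ⊗ₜ[ℚ] Finsupp.single [RTree.node a f] 1) :
    ¬ ∃ S : FV Ω →ₗ[ℚ] FV Ω,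
      ∀ T : RForest Ω, IsTree T →
        (TensorProduct.lift (shLin.compl₂ S)) (Δ T)
            = (if T = ([] : RForest Ω) then (1 : ℚ) else 0) • Finsupp.single [] 1
          ∧ (TensorProduct.lift (shLin ∘ₗ S)) (Δ T)
            = (if T = ([] : RForest Ω) then (1 : ℚ) else 0) • Finsupp.single [] 1 := by
  rintro ⟨S, hS⟩
  obtain ⟨a⟩ := ‹Nonempty Ω›
  set T : RForest Ω := [RTree.node a [RTree.node a [], RTree.node a []]] with hT
  have key : shLin (Finsupp.single ([] : RForest Ω) 1) = LinearMap.id := by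
    apply Finsupp.lhom_ext
    intro F b
    rw [hshLin]
    simp [Finsupp.lift_apply, Finsupp.sum_single_index, h0l, Finsupp.smul_single]
  have hempty := (hS [] (by simp [IsTree])).1
  rw [hΔ0] at hempty
  simp only [TensorProduct.lift.tmul, LinearMap.compl₂_apply, key, LinearMap.id_apply,
    if_true, one_smul] at hempty
  have hTtree : IsTree T := by simp [hT, IsTree]
  have hTT := (hS T hTtree).2
  have hΔT : Δ T = Finsupp.single [] 1 ⊗ₜ[ℚ] Finsupp.single T 1 := by
    rw [hT]; exact hΔforest a _ (by simp)
  rw [hΔT] at hTT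
  rw [if_neg (by simp [hT]), zero_smul] at hTT
  simp only [TensorProduct.lift.tmul, LinearMap.coe_comp, Function.comp_apply,
    if_true, one_smul, hempty, key, LinearMap.id_apply] at hTT
  exact one_ne_zero (Finsupp.single_eq_zero.mp hTT)
end

section
/- Any forest appearing with nonzero coefficient in the shuffle product T ⧢ T' of two nonempty rooted trees contains a vertex of fertility exactly one. -/
/-- `HasUnary t` holds when the tree `t` contains a vertex of fertility
exactly one (a vertex with exactly one direct descendant). -/
inductive HasUnary {Ω : Type} : RTree Ω → Prop where
  | here (a : Ω) (ts : List (RTree Ω)) : ts.length = 1 → HasUnary (RTree.node a ts)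
  | child (a : Ω) (ts : List (RTree Ω)) (t : RTree Ω) :
      t ∈ ts → HasUnary t → HasUnary (RTree.node a ts)

lemma sizeT_pos {Ω : Type} (t : RTree Ω) : 0 < sizeOf t := by
  cases t with | node a ts => simp

lemma sizeT_lt {Ω : Type} {t : RTree Ω} {ts : List (RTree Ω)} (a : Ω) (h : t ∈ ts) :
    sizeOf t < sizeOf (RTree.node a ts) := by
  have := List.sizeOf_lt_of_mem h
  cases ts with | nil => simp at h | cons x l => simp_all; omega

lemma mapDomain_ne_zero {α β : Type*} {g : α → β} {x : α →₀ ℚ} {b : β}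
    (h : Finsupp.mapDomain g x b ≠ 0) : ∃ a, x a ≠ 0 ∧ g a = b := by
  classical
  have hb : b ∈ (Finsupp.mapDomain g x).support := Finsupp.mem_support_iff.2 h
  have := Finsupp.mapDomain_support hb
  obtain ⟨a, ha, rfl⟩ := Finset.mem_image.1 this
  exact ⟨a, Finsupp.mem_support_iff.1 ha, rfl⟩

lemma single_ne_zero_eq {α : Type*} {F G : α} (h : (Finsupp.single F (1 : ℚ)) G ≠ 0) :
    G = F := by
  by_contra hne
  rw [Finsupp.single_eq_of_ne' (Ne.symm hne)] at h
  exact h rfl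

/-- every forest appearing with nonzero coefficient in the
shuffle product `T ⧢ T'` of two nonempty rooted trees contains a vertex of
fertility exactly one. -/
theorem shuffle_has_unary_vertex {Ω : Type}
    (sh : RForest Ω → RForest Ω → FV Ω)
    (h0l : ∀ F, sh [] F = Finsupp.single F 1)
    (h0r : ∀ F, sh F [] = Finsupp.single F 1)
    (htree : ∀ (a a' : Ω) (f f' : RForest Ω),
      sh [RTree.node a f] [RTree.node a' f'] =
        graftF a (sh f [RTree.node a' f']) + graftF a' (sh [RTree.node a f] f'))
    (hforest : ∀ F F' : RForest Ω, F ≠ [] → F' ≠ [] → 3 ≤ F.length + F'.length →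
      sh F F' = ((F.length * F'.length : ℚ))⁻¹ •
        ∑ i : Fin F.length, ∑ j : Fin F'.length,
          embedF F F' i j (sh [F.get i] [F'.get j])) :
    ∀ (T T' : RTree Ω) (F : RForest Ω),
      (sh [T] [T']) F ≠ 0 → ∃ t ∈ F, HasUnary t := by
  classical
  have key : ∀ n : ℕ, ∀ (T T' : RTree Ω), sizeOf T + sizeOf T' ≤ n →
      ∀ F, (sh [T] [T']) F ≠ 0 → ∃ t ∈ F, HasUnary t := by
    intro n
    induction n with
    | zero =>
      intro T T' hle
      have := sizeT_pos T; have := sizeT_pos T'; omega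
    | succ n ih =>
      rintro ⟨a, f⟩ ⟨a', f'⟩ hle F hF
      rw [htree, Finsupp.add_apply] at hF
      have hor : (graftF a (sh f [RTree.node a' f'])) F ≠ 0 ∨
          (graftF a' (sh [RTree.node a f] f')) F ≠ 0 := by
        by_contra h; push_neg at h; rw [h.1, h.2] at hF; exact hF (by ring)
      rcases hor with h | h
      · obtain ⟨G, hG, rfl⟩ := mapDomain_ne_zero
          (by simpa [graftF, Finsupp.lmapDomain_apply] using h)
        match f, hG with
        | [], hG =>
          rw [h0l] at hG
          rw [single_ne_zero_eq hG]
          exact ⟨_, List.mem_singleton.2 rfl, HasUnary.here a _ rfl⟩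
        | [t], hG =>
          have hlt : sizeOf t + sizeOf (RTree.node a' f') ≤ n := by
            have := sizeT_lt (ts := [t]) a (List.mem_singleton.2 rfl); omega
          obtain ⟨u, hu, hun⟩ := ih t _ hlt G hG
          exact ⟨_, List.mem_singleton.2 rfl, HasUnary.child a G u hu hun⟩
        | t1 :: t2 :: rest, hG =>
          rw [hforest (t1 :: t2 :: rest) [RTree.node a' f'] (by simp) (by simp)
            (by simp), Finsupp.smul_apply] at hG
          have hG2 := right_ne_zero_of_smul hG
          rw [Finsupp.finset_sum_apply] at hG2
          obtain ⟨i, -, hGi⟩ := Finset.exists_ne_zero_of_sum_ne_zero hG2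
          rw [Finsupp.finset_sum_apply] at hGi
          obtain ⟨j, -, hGj⟩ := Finset.exists_ne_zero_of_sum_ne_zero hGi
          have hj : ([RTree.node a' f'] : RForest Ω).get j = RTree.node a' f' :=
            by simp
          rw [hj] at hGj
          obtain ⟨H, hH, hHeq⟩ := mapDomain_ne_zero
            (by simpa [embedF, Finsupp.lmapDomain_apply] using hGj)
          have hmem : (t1 :: t2 :: rest).get i ∈ t1 :: t2 :: rest := List.get_mem _ i
          have hlt : sizeOf ((t1 :: t2 :: rest).get i) + sizeOf (RTree.node a' f') ≤ n := by
            have := sizeT_lt a hmem; omega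
          obtain ⟨u, hu, hun⟩ := ih _ _ hlt H hH
          refine ⟨_, List.mem_singleton.2 rfl, HasUnary.child a G u ?_ hun⟩
          rw [← hHeq]; simp [hu]
      · obtain ⟨G, hG, rfl⟩ := mapDomain_ne_zero
          (by simpa [graftF, Finsupp.lmapDomain_apply] using h)
        match f', hG with
        | [], hG =>
          rw [h0r] at hG
          rw [single_ne_zero_eq hG]
          exact ⟨_, List.mem_singleton.2 rfl, HasUnary.here a' _ rfl⟩
        | [t'], hG =>
          have hlt : sizeOf (RTree.node a f) + sizeOf t' ≤ n := by
            have := sizeT_lt (ts := [t']) a' (List.mem_singleton.2 rfl); omega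
          obtain ⟨u, hu, hun⟩ := ih _ t' hlt G hG
          exact ⟨_, List.mem_singleton.2 rfl, HasUnary.child a' G u hu hun⟩
        | t1 :: t2 :: rest, hG =>
          rw [hforest [RTree.node a f] (t1 :: t2 :: rest) (by simp) (by simp)
            (by simp; omega), Finsupp.smul_apply] at hG
          have hG2 := right_ne_zero_of_smul hG
          rw [Finsupp.finset_sum_apply] at hG2
          obtain ⟨i, -, hGi⟩ := Finset.exists_ne_zero_of_sum_ne_zero hG2
          rw [Finsupp.finset_sum_apply] at hGi
          obtain ⟨j, -, hGj⟩ := Finset.exists_ne_zero_of_sum_ne_zero hGi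
          have hi : ([RTree.node a f] : RForest Ω).get i = RTree.node a f :=
            by simp
          rw [hi] at hGj
          obtain ⟨H, hH, hHeq⟩ := mapDomain_ne_zero
            (by simpa [embedF, Finsupp.lmapDomain_apply] using hGj)
          have hmem : (t1 :: t2 :: rest).get j ∈ t1 :: t2 :: rest := List.get_mem _ j
          have hlt : sizeOf (RTree.node a f) + sizeOf ((t1 :: t2 :: rest).get j) ≤ n := by
            have := sizeT_lt a' hmem; omega
          obtain ⟨u, hu, hun⟩ := ih _ _ hlt H hH
          refine ⟨_, List.mem_singleton.2 rfl, HasUnary.child a' G u ?_ hun⟩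
          rw [← hHeq]; simp [hu]
  intro T T' F hF
  exact key (sizeOf T + sizeOf T') T T' le_rfl F hF
end

section
/- A rooted tree T is primitive for the coproduct Δ* dual to the shuffle of rooted forests (i.e. Δ*(T) = T ⊗ ∅ + ∅ ⊗ T) if and only if every non-leaf vertex of T has fertility at least two. -/
/-- `AllFertGeTwo t` holds when every non-leaf vertex of `t` has fertility at
least two (equivalently, no vertex has exactly one child). -/
inductive AllFertGeTwo {Ω : Type} : RTree Ω → Prop where
  | node (a : Ω) (ts : List (RTree Ω)) :
      ts.length ≠ 1 → (∀ t ∈ ts, AllFertGeTwo t) → AllFertGeTwo (RTree.node a ts)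

section AuxLemmas

variable {Ω : Type}

open Classical in
private lemma mapDomain_cases {α β : Type*} {g : α → β} (hg : Function.Injective g)
    (v : α →₀ ℚ) (x : β) :
    Finsupp.mapDomain g v x = 0 ∨ ∃ y, x = g y ∧ Finsupp.mapDomain g v x = v y := by
  by_cases h : x ∈ Set.range g
  · obtain ⟨y, rfl⟩ := h
    exact Or.inr ⟨y, rfl, Finsupp.mapDomain_apply hg v y⟩
  · exact Or.inl (Finsupp.mapDomain_notin_range v x h)

private lemma node_inj (a : Ω) :
    Function.Injective (fun G => ([RTree.node a G] : RForest Ω)) := by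
  intro x y h
  simpa using h

private lemma graftF_apply_node (a : Ω) (v : FV Ω) (G : RForest Ω) :
    graftF a v [RTree.node a G] = v G := by
  simpa [graftF] using Finsupp.mapDomain_apply (node_inj a) v G

private lemma graftF_cases (a : Ω) (v : FV Ω) (x : RForest Ω) :
    graftF a v x = 0 ∨ ∃ G, x = [RTree.node a G] ∧ graftF a v x = v G := by
  simpa [graftF] using mapDomain_cases (node_inj a) v x

private lemma graftF_nonneg (a : Ω) (v : FV Ω) (hv : ∀ G, 0 ≤ v G) (x : RForest Ω) :
    0 ≤ graftF a v x := by
  rcases graftF_cases a v x with h | ⟨G, _, h⟩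
  · exact h.ge
  · rw [h]; exact hv G

private lemma embed_inj (F F' : RForest Ω) (i j : ℕ) :
    Function.Injective
      (fun G => F.take i ++ G ++ F.drop (i + 1) ++ F'.eraseIdx j : RForest Ω → RForest Ω) := by
  intro x y h
  simp only [List.append_assoc] at h
  have h2 := List.append_cancel_left h
  rw [← List.append_assoc, ← List.append_assoc] at h2
  exact List.append_cancel_right (List.append_cancel_right h2)

private lemma embedF_apply (F F' : RForest Ω) (i j : ℕ) (v : FV Ω) (G : RForest Ω) :
    embedF F F' i j v (F.take i ++ G ++ F.drop (i + 1) ++ F'.eraseIdx j) = v G := by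
  simpa [embedF] using Finsupp.mapDomain_apply (embed_inj F F' i j) v G

private lemma embedF_cases (F F' : RForest Ω) (i j : ℕ) (v : FV Ω) (x : RForest Ω) :
    embedF F F' i j v x = 0 ∨
      ∃ G, x = F.take i ++ G ++ F.drop (i + 1) ++ F'.eraseIdx j ∧
        embedF F F' i j v x = v G := by
  simpa [embedF] using mapDomain_cases (embed_inj F F' i j) v x

private lemma embedF_nonneg (F F' : RForest Ω) (i j : ℕ) (v : FV Ω)
    (hv : ∀ G, 0 ≤ v G) (x : RForest Ω) : 0 ≤ embedF F F' i j v x := by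
  rcases embedF_cases F F' i j v x with h | ⟨G, _, h⟩
  · exact h.ge
  · rw [h]; exact hv G

private lemma single_nonneg' (F G : RForest Ω) : 0 ≤ (Finsupp.single F (1:ℚ)) G := by
  classical
  rw [Finsupp.single_apply]
  split <;> norm_num

private lemma single_apply_ne (F G : RForest Ω) (h : F ≠ G) :
    (Finsupp.single F (1:ℚ)) G = 0 := by
  classical
  rw [Finsupp.single_apply, if_neg h]

private lemma sizeOf_list_pos (F : RForest Ω) : 1 ≤ sizeOf F := by
  cases F <;> simp <;> omega

private lemma sizeOf_mem_le {t : RTree Ω} {F : RForest Ω} (h : t ∈ F) :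
    2 + sizeOf t ≤ sizeOf F := by
  induction F with
  | nil => simp at h
  | cons u F ih =>
    rcases List.mem_cons.mp h with rfl | h
    · have := sizeOf_list_pos F
      simp; omega
    · have := ih h
      simp; omega

private lemma sizeOf_singleton (t : RTree Ω) : sizeOf ([t] : RForest Ω) = 2 + sizeOf t := by
  simp; omega

private lemma sizeOf_mem_lt {t : RTree Ω} {F : RForest Ω} (h : t ∈ F)
    (hlen : 2 ≤ F.length) : 2 + sizeOf t < sizeOf F := by
  match F, hlen with
  | (u :: w :: F), _ =>
    rcases List.mem_cons.mp h with rfl | h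
    · have h1 := sizeOf_list_pos F
      simp; omega
    · have h2 := sizeOf_mem_le h
      simp at h2 ⊢; omega

private lemma take_set (l : RForest Ω) (i : ℕ) (a : RTree Ω) :
    (l.set i a).take i = l.take i := by
  induction l generalizing i with
  | nil => simp
  | cons x xs ih =>
    cases i with
    | zero => simp
    | succ n => simp [List.set, ih]

end AuxLemmas

section ShLemmas

variable {Ω : Type} (sh : RForest Ω → RForest Ω → FV Ω)

/-- The shuffle of two single trees is supported on single trees. -/
private lemma sh_single_len
    (htree : ∀ (a a' : Ω) (f f' : RForest Ω),
      sh [RTree.node a f] [RTree.node a' f'] =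
        graftF a (sh f [RTree.node a' f']) + graftF a' (sh [RTree.node a f] f'))
    (T₁ T₂ : RTree Ω) (F : RForest Ω) (h : sh [T₁] [T₂] F ≠ 0) : F.length = 1 := by
  obtain ⟨a, f⟩ := T₁
  obtain ⟨a', f'⟩ := T₂
  rw [htree a a' f f', Finsupp.add_apply] at h
  have h' : graftF a (sh f [RTree.node a' f']) F ≠ 0 ∨
      graftF a' (sh [RTree.node a f] f') F ≠ 0 := by
    by_contra hc
    push_neg at hc
    rw [hc.1, hc.2] at h
    simp at h
  rcases h' with h' | h'
  · rcases graftF_cases a _ F with h0 | ⟨G, rfl, _⟩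
    · exact absurd h0 h'
    · rfl
  · rcases graftF_cases a' _ F with h0 | ⟨G, rfl, _⟩
    · exact absurd h0 h'
    · rfl

/-- All coefficients of the shuffle are nonnegative. -/
private lemma sh_nonneg
    (h0l : ∀ F, sh [] F = Finsupp.single F 1)
    (h0r : ∀ F, sh F [] = Finsupp.single F 1)
    (htree : ∀ (a a' : Ω) (f f' : RForest Ω),
      sh [RTree.node a f] [RTree.node a' f'] =
        graftF a (sh f [RTree.node a' f']) + graftF a' (sh [RTree.node a f] f'))
    (hforest : ∀ F F' : RForest Ω, F ≠ [] → F' ≠ [] → 3 ≤ F.length + F'.length →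
      sh F F' = ((F.length * F'.length : ℚ))⁻¹ •
        ∑ i : Fin F.length, ∑ j : Fin F'.length,
          embedF F F' i j (sh [F.get i] [F'.get j])) :
    ∀ (F F' : RForest Ω) (G : RForest Ω), 0 ≤ sh F F' G := by
  suffices H : ∀ n (F F' : RForest Ω), sizeOf F + sizeOf F' ≤ n → ∀ G, 0 ≤ sh F F' G by
    intro F F' G
    exact H (sizeOf F + sizeOf F') F F' le_rfl G
  intro n
  induction n using Nat.strong_induction_on with
  | _ n ih =>
    intro F F' hn G
    match F, F' with
    | [], F' => rw [h0l]; exact single_nonneg' _ _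
    | (T :: Fr), [] => rw [h0r]; exact single_nonneg' _ _
    | [T], [T'] =>
      obtain ⟨a, f⟩ := T
      obtain ⟨a', f'⟩ := T'
      rw [htree a a' f f', Finsupp.add_apply]
      have hsz : sizeOf ([RTree.node a f] : RForest Ω) = 3 + sizeOf a + sizeOf f := by
        simp; omega
      have hsz' : sizeOf ([RTree.node a' f'] : RForest Ω) = 3 + sizeOf a' + sizeOf f' := by
        simp; omega
      have h1 : ∀ G', 0 ≤ sh f [RTree.node a' f'] G' := by
        refine ih (sizeOf f + sizeOf ([RTree.node a' f'] : RForest Ω)) ?_ f _ le_rfl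
        omega
      have h2 : ∀ G', 0 ≤ sh [RTree.node a f] f' G' := by
        refine ih (sizeOf ([RTree.node a f] : RForest Ω) + sizeOf f') ?_ _ f' le_rfl
        omega
      exact add_nonneg (graftF_nonneg _ _ h1 _) (graftF_nonneg _ _ h2 _)
    | (T :: Fr), (T' :: F'r) =>
      -- general case with total length ≥ 3 (the 1-1 case is matched above)
      have hne : (T :: Fr : RForest Ω) ≠ [] := by simp
      have hne' : (T' :: F'r : RForest Ω) ≠ [] := by simp
      by_cases hlen : 3 ≤ (T :: Fr).length + (T' :: F'r).length
      · rw [hforest _ _ hne hne' hlen, Finsupp.smul_apply, Finset.sum_apply']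
        refine mul_nonneg (by positivity) ?_
        refine Finset.sum_nonneg fun i _ => ?_
        rw [Finset.sum_apply']
        refine Finset.sum_nonneg fun j _ => ?_
        refine embedF_nonneg _ _ _ _ _ (fun G' => ?_) G
        have hmemi : (T :: Fr).get i ∈ (T :: Fr) := List.get_mem _ i
        have hmemj : (T' :: F'r).get j ∈ (T' :: F'r) := List.get_mem _ j
        have hle1 : 2 + sizeOf ((T :: Fr).get i) ≤ sizeOf (T :: Fr) := sizeOf_mem_le hmemi
        have hle2 : 2 + sizeOf ((T' :: F'r).get j) ≤ sizeOf (T' :: F'r) := sizeOf_mem_le hmemj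
        have hstrict : 2 + sizeOf ((T :: Fr).get i) < sizeOf (T :: Fr) ∨
            2 + sizeOf ((T' :: F'r).get j) < sizeOf (T' :: F'r) := by
          rcases Nat.lt_or_ge (T :: Fr).length 2 with h2 | h2
          · right
            refine sizeOf_mem_lt hmemj ?_
            simp only [List.length_cons] at hlen h2 ⊢
            omega
          · left; exact sizeOf_mem_lt hmemi h2
        have hsz1 := sizeOf_singleton ((T :: Fr).get i)
        have hsz2 := sizeOf_singleton ((T' :: F'r).get j)
        refine ih (sizeOf ([(T :: Fr).get i] : RForest Ω) +
          sizeOf ([(T' :: F'r).get j] : RForest Ω)) ?_ _ _ le_rfl G'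
        omega
      · -- lengths are both 1
        have h1 : Fr = [] := by
          cases Fr <;> cases F'r <;> simp_all <;> omega
        have h2 : F'r = [] := by
          cases Fr <;> cases F'r <;> simp_all <;> omega
        subst h1; subst h2
        obtain ⟨a, f⟩ := T
        obtain ⟨a', f'⟩ := T'
        rw [htree a a' f f', Finsupp.add_apply]
        have hsz : sizeOf ([RTree.node a f] : RForest Ω) = 3 + sizeOf a + sizeOf f := by
          simp; omega
        have hsz' : sizeOf ([RTree.node a' f'] : RForest Ω) = 3 + sizeOf a' + sizeOf f' := by
          simp; omega
        have hh1 : ∀ G', 0 ≤ sh f [RTree.node a' f'] G' := by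
          refine ih (sizeOf f + sizeOf ([RTree.node a' f'] : RForest Ω)) ?_ f _ le_rfl
          omega
        have hh2 : ∀ G', 0 ≤ sh [RTree.node a f] f' G' := by
          refine ih (sizeOf ([RTree.node a f] : RForest Ω) + sizeOf f') ?_ _ f' le_rfl
          omega
        exact add_nonneg (graftF_nonneg _ _ hh1 _) (graftF_nonneg _ _ hh2 _)

/-- Key vanishing lemma: if `ts` is not a single tree and every member of `ts`
kills all tree-tree shuffles, then `sh F F' ts = 0` whenever one of `F`, `F'`
is a single tree. -/
private lemma sh_key
    (h0l : ∀ F, sh [] F = Finsupp.single F 1)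
    (h0r : ∀ F, sh F [] = Finsupp.single F 1)
    (htree : ∀ (a a' : Ω) (f f' : RForest Ω),
      sh [RTree.node a f] [RTree.node a' f'] =
        graftF a (sh f [RTree.node a' f']) + graftF a' (sh [RTree.node a f] f'))
    (hforest : ∀ F F' : RForest Ω, F ≠ [] → F' ≠ [] → 3 ≤ F.length + F'.length →
      sh F F' = ((F.length * F'.length : ℚ))⁻¹ •
        ∑ i : Fin F.length, ∑ j : Fin F'.length,
          embedF F F' i j (sh [F.get i] [F'.get j]))
    (ts : RForest Ω) (hts : ts.length ≠ 1)
    (hmem : ∀ t ∈ ts, ∀ X Y : RTree Ω, sh [X] [Y] [t] = 0) :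
    ∀ F F' : RForest Ω, F.length = 1 ∨ F'.length = 1 → sh F F' ts = 0 := by
  intro F F' hsing
  match F, F' with
  | [], F' =>
    have hF' : F'.length = 1 := by
      rcases hsing with h | h
      · simp at h
      · exact h
    rw [h0l]
    refine single_apply_ne _ _ ?_
    intro h
    exact hts (h ▸ hF')
  | (T :: Fr), [] =>
    have hF : (T :: Fr).length = 1 := by
      rcases hsing with h | h
      · exact h
      · simp at h
    rw [h0r]
    refine single_apply_ne _ _ ?_
    intro h
    exact hts (h ▸ hF)
  | (T :: Fr), (T' :: F'r) =>
    by_cases hlen : 3 ≤ (T :: Fr).length + (T' :: F'r).length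
    · have hz : ∀ (i : Fin (T :: Fr).length) (j : Fin (T' :: F'r).length),
          embedF (T :: Fr) (T' :: F'r) i j
            (sh [(T :: Fr).get i] [(T' :: F'r).get j]) ts = 0 := by
        intro i j
        rcases embedF_cases (T :: Fr) (T' :: F'r) i j
            (sh [(T :: Fr).get i] [(T' :: F'r).get j]) ts with h | ⟨G, hG, h⟩
        · exact h
        · rw [h]
          by_contra hne
          have hG1 := sh_single_len sh htree _ _ G hne
          obtain ⟨g, rfl⟩ := List.length_eq_one_iff.mp hG1
          have hg : g ∈ ts := by
            rw [hG]; simp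
          exact hne (hmem g hg _ _)
      rw [hforest _ _ (by simp) (by simp) hlen, Finsupp.smul_apply, Finset.sum_apply']
      have hsum : ∀ i : Fin (T :: Fr).length,
          (∑ j : Fin (T' :: F'r).length,
            embedF (T :: Fr) (T' :: F'r) i j
              (sh [(T :: Fr).get i] [(T' :: F'r).get j])) ts = 0 := by
        intro i
        rw [Finset.sum_apply']
        exact Finset.sum_eq_zero fun j _ => hz i j
      rw [Finset.sum_eq_zero fun i _ => hsum i, smul_zero]
    · have h1 : Fr = [] := by
        cases Fr <;> cases F'r <;> simp_all <;> omega
      have h2 : F'r = [] := by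
        cases Fr <;> cases F'r <;> simp_all <;> omega
      subst h1; subst h2
      by_contra hne
      exact hts (sh_single_len sh htree T T' ts hne)


private lemma prim_of_fert
    (h0l : ∀ F, sh [] F = Finsupp.single F 1)
    (h0r : ∀ F, sh F [] = Finsupp.single F 1)
    (htree : ∀ (a a' : Ω) (f f' : RForest Ω),
      sh [RTree.node a f] [RTree.node a' f'] =
        graftF a (sh f [RTree.node a' f']) + graftF a' (sh [RTree.node a f] f'))
    (hforest : ∀ F F' : RForest Ω, F ≠ [] → F' ≠ [] → 3 ≤ F.length + F'.length →
      sh F F' = ((F.length * F'.length : ℚ))⁻¹ •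
        ∑ i : Fin F.length, ∑ j : Fin F'.length,
          embedF F F' i j (sh [F.get i] [F'.get j])) :
    ∀ n (T : RTree Ω), sizeOf T ≤ n → AllFertGeTwo T →
      ∀ X Y : RTree Ω, sh [X] [Y] [T] = 0 := by
  intro n
  induction n using Nat.strong_induction_on with
  | _ n ih =>
    rintro ⟨a, ts⟩ hn hT X Y
    have hlen : ts.length ≠ 1 := by
      cases hT with | node _ _ h _ => exact h
    have hall : ∀ t ∈ ts, AllFertGeTwo t := by
      cases hT with | node _ _ _ h => exact h
    have hmem : ∀ t ∈ ts, ∀ X Y : RTree Ω, sh [X] [Y] [t] = 0 := by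
      intro t ht
      have h1 := sizeOf_mem_le ht
      have hst : sizeOf t < sizeOf (RTree.node a ts) := by
        simp; omega
      exact ih (sizeOf t) (lt_of_lt_of_le hst hn) t le_rfl (hall t ht)
    have key := sh_key sh h0l h0r htree hforest ts hlen hmem
    obtain ⟨a₁, f₁⟩ := X
    obtain ⟨a₂, f₂⟩ := Y
    rw [htree, Finsupp.add_apply]
    have t1 : graftF a₁ (sh f₁ [RTree.node a₂ f₂]) [RTree.node a ts] = 0 := by
      rcases graftF_cases a₁ (sh f₁ [RTree.node a₂ f₂]) [RTree.node a ts] with h | ⟨G, hG, h⟩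
      · exact h
      · rw [h]
        obtain ⟨-, rfl⟩ : a = a₁ ∧ ts = G := by simpa using hG
        exact key f₁ [RTree.node a₂ f₂] (Or.inr rfl)
    have t2 : graftF a₂ (sh [RTree.node a₁ f₁] f₂) [RTree.node a ts] = 0 := by
      rcases graftF_cases a₂ (sh [RTree.node a₁ f₁] f₂) [RTree.node a ts] with h | ⟨G, hG, h⟩
      · exact h
      · rw [h]
        obtain ⟨-, rfl⟩ : a = a₂ ∧ ts = G := by simpa using hG
        exact key [RTree.node a₁ f₁] f₂ (Or.inl rfl)
    rw [t1, t2, add_zero]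

private lemma sh_exists_pos
    (h0l : ∀ F, sh [] F = Finsupp.single F 1)
    (h0r : ∀ F, sh F [] = Finsupp.single F 1)
    (htree : ∀ (a a' : Ω) (f f' : RForest Ω),
      sh [RTree.node a f] [RTree.node a' f'] =
        graftF a (sh f [RTree.node a' f']) + graftF a' (sh [RTree.node a f] f'))
    (hforest : ∀ F F' : RForest Ω, F ≠ [] → F' ≠ [] → 3 ≤ F.length + F'.length →
      sh F F' = ((F.length * F'.length : ℚ))⁻¹ •
        ∑ i : Fin F.length, ∑ j : Fin F'.length,
          embedF F F' i j (sh [F.get i] [F'.get j])) :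
    ∀ n (T : RTree Ω), sizeOf T ≤ n → ¬ AllFertGeTwo T →
      ∃ X Y : RTree Ω, 0 < sh [X] [Y] [T] := by
  have hnn := sh_nonneg sh h0l h0r htree hforest
  intro n
  induction n using Nat.strong_induction_on with
  | _ n ih =>
    rintro ⟨a, ts⟩ hn hT
    have hcase : ts.length = 1 ∨ (ts.length ≠ 1 ∧ ∃ t ∈ ts, ¬ AllFertGeTwo t) := by
      by_cases h1 : ts.length = 1
      · exact Or.inl h1
      · refine Or.inr ⟨h1, ?_⟩
        by_contra hc
        push_neg at hc
        exact hT (AllFertGeTwo.node a ts h1 hc)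
    rcases hcase with h1 | ⟨h1, t, ht, hbad⟩
    · obtain ⟨t, rfl⟩ := List.length_eq_one_iff.mp h1
      obtain ⟨b, f⟩ := t
      refine ⟨RTree.node a [], RTree.node b f, ?_⟩
      rw [htree, Finsupp.add_apply]
      have e1 : graftF a (sh [] [RTree.node b f]) [RTree.node a [RTree.node b f]] =
          sh [] [RTree.node b f] [RTree.node b f] :=
        graftF_apply_node a _ [RTree.node b f]
      have e2 : sh [] [RTree.node b f] [RTree.node b f] = 1 := by
        rw [h0l]; exact Finsupp.single_eq_same
      have h2 : (0:ℚ) ≤ graftF b (sh [RTree.node a []] f) [RTree.node a [RTree.node b f]] :=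
        graftF_nonneg _ _ (fun G => hnn _ _ G) _
      rw [e1, e2]
      linarith
    · obtain ⟨i, hi, hit⟩ := List.mem_iff_getElem.mp ht
      have hts2 : 2 ≤ ts.length := by omega
      have h1' := sizeOf_mem_le ht
      have hszt : sizeOf t < sizeOf (RTree.node a ts) := by simp; omega
      obtain ⟨X, Y, hXY⟩ := ih (sizeOf t) (lt_of_lt_of_le hszt hn) t le_rfl hbad
      obtain ⟨b, f₂⟩ := Y
      refine ⟨RTree.node a (ts.set i X), RTree.node b f₂, ?_⟩
      rw [htree, Finsupp.add_apply]
      have e1 : graftF a (sh (ts.set i X) [RTree.node b f₂]) [RTree.node a ts] =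
          sh (ts.set i X) [RTree.node b f₂] ts :=
        graftF_apply_node a _ ts
      have h2 : (0:ℚ) ≤ graftF b (sh [RTree.node a (ts.set i X)] f₂) [RTree.node a ts] :=
        graftF_nonneg _ _ (fun G => hnn _ _ G) _
      have hlenset : (ts.set i X).length = ts.length := List.length_set
      have hpos : 0 < sh (ts.set i X) [RTree.node b f₂] ts := by
        have hne1 : (ts.set i X) ≠ [] := by
          intro h; rw [h] at hlenset; simp at hlenset; omega
        rw [hforest (ts.set i X) [RTree.node b f₂] hne1 (by simp)
          (by simp [hlenset]; omega)]
        rw [Finsupp.smul_apply, Finset.sum_apply', smul_eq_mul]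
        have hilt : i < (ts.set i X).length := by omega
        refine mul_pos ?_ ?_
        · rw [inv_pos]
          have hq : (0:ℚ) < ((ts.set i X).length : ℚ) := by
            rw [hlenset]
            exact_mod_cast (by omega : 0 < ts.length)
          simp only [List.length_cons, List.length_nil]
          push_cast
          nlinarith
        · refine Finset.sum_pos' (fun i' _ => ?_) ⟨⟨i, hilt⟩, Finset.mem_univ _, ?_⟩
          · rw [Finset.sum_apply']
            exact Finset.sum_nonneg fun j _ =>
              embedF_nonneg _ _ _ _ _ (fun G => hnn _ _ G) ts
          · rw [Finset.sum_apply']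
            refine Finset.sum_pos' (fun j _ =>
              embedF_nonneg _ _ _ _ _ (fun G => hnn _ _ G) ts)
              ⟨⟨0, by simp⟩, Finset.mem_univ _, ?_⟩
            have hg1 : (ts.set i X).get ⟨i, hilt⟩ = X := by
              simp [List.get_eq_getElem]
            have hg2 : ([RTree.node b f₂] : RForest Ω).get ⟨0, by simp⟩ = RTree.node b f₂ := rfl
            have hts_eq : ts = (ts.set i X).take i ++ [t] ++ (ts.set i X).drop (i + 1) ++
                (([RTree.node b f₂] : RForest Ω).eraseIdx 0) := by
              rw [take_set, List.drop_set, if_pos (Nat.lt_succ_self i)]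
              show ts = ts.take i ++ [t] ++ ts.drop (i + 1) ++ []
              rw [List.append_nil, List.append_assoc, List.singleton_append, ← hit,
                ← List.drop_eq_getElem_cons hi]
              exact (List.take_append_drop i ts).symm
            have heval := embedF_apply (ts.set i X) [RTree.node b f₂] i 0
              (sh [X] [RTree.node b f₂]) [t]
            rw [← hts_eq] at heval
            simp only [hg1, hg2]
            show 0 < embedF (ts.set i X) [RTree.node b f₂] i 0
                (sh [X] [RTree.node b f₂]) ts
            rw [heval]
            exact hXY
      rw [e1]
      linarith


end ShLemmas

/-- a rooted tree `T` is primitive for the coproduct dual to the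
shuffle of rooted forests (i.e. `⟨T, T₁ ⧢ T₂⟩ = 0` for all nonempty trees
`T₁, T₂`) if and only if every non-leaf vertex of `T` has fertility at least
two. -/
theorem primitive_iff_fertility {Ω : Type}
    (sh : RForest Ω → RForest Ω → FV Ω)
    (h0l : ∀ F, sh [] F = Finsupp.single F 1)
    (h0r : ∀ F, sh F [] = Finsupp.single F 1)
    (htree : ∀ (a a' : Ω) (f f' : RForest Ω),
      sh [RTree.node a f] [RTree.node a' f'] =
        graftF a (sh f [RTree.node a' f']) + graftF a' (sh [RTree.node a f] f'))
    (hforest : ∀ F F' : RForest Ω, F ≠ [] → F' ≠ [] → 3 ≤ F.length + F'.length →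
      sh F F' = ((F.length * F'.length : ℚ))⁻¹ •
        ∑ i : Fin F.length, ∑ j : Fin F'.length,
          embedF F F' i j (sh [F.get i] [F'.get j])) :
    ∀ T : RTree Ω,
      (∀ T₁ T₂ : RTree Ω, (sh [T₁] [T₂]) [T] = 0) ↔ AllFertGeTwo T := by
  intro T
  constructor
  · intro h
    by_contra hT
    obtain ⟨X, Y, hp⟩ := sh_exists_pos sh h0l h0r htree hforest (sizeOf T) T le_rfl hT
    rw [h X Y] at hp
    exact lt_irrefl 0 hp
  · intro hT X Y
    exact prim_of_fert sh h0l h0r htree hforest (sizeOf T) T le_rfl hT X Y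
end

section
/- Let A be a unital commutative algebra, (R,P) a commutative associative Rota-Baxter algebra of weight λ, and φ : A → R an algebra homomorphism. Then there exists a unique linear map φ̄ from the span of nonempty A-decorated rooted forests to R satisfying: φ̄(•_a) = φ(a) for single-vertex trees, φ̄(B₊^a(F)) = φ(a)·P(φ̄(F)) for trees with at least two vertices, and φ̄(T₁⋯T_n) = φ̄(T₁)⋯φ̄(T_n) for concatenations; and this φ̄ satisfies φ̄ ∘ B₊^{1_A} = P ∘ φ̄ and φ̄(F ⋄_λ F') = φ̄(F)·φ̄(F') for all nonempty forests F, F'. -/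
def rootLabel {Ω : Type} : RTree Ω → Ω | RTree.node a _ => a

def childrenOf {Ω : Type} : RTree Ω → RForest Ω | RTree.node _ ts => ts

/-- Linear extension of `G ↦ F` with its `i`-th tree `B₊^{aᵢ}(fᵢ)` replaced by
`B₊^{aᵢ}(G)`. -/
noncomputable def setGraftF {Ω : Type} (F : RForest Ω) (i : Fin F.length) :
    FV Ω →ₗ[ℚ] FV Ω :=
  Finsupp.lmapDomain ℚ ℚ (fun G => F.set i (RTree.node (rootLabel (F.get i)) G))

set_option linter.unusedSectionVars false

section AuxDefs

variable {A R : Type} [CommRing R] [Algebra ℚ R]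

/-- Evaluation of `φ̄` on a single decorated tree, by nested recursion. -/
noncomputable def phbT (φ : A → R) (P : R → R) : RTree A → R :=
  RTree.rec (motive_1 := fun _ => R) (motive_2 := fun _ => R)
    (fun a ts ih => φ a * (if ts.isEmpty then 1 else P ih))
    1 (fun _ _ ihh iht => ihh * iht)

noncomputable def phbFaux (φ : A → R) (P : R → R) : RForest A → R :=
  RTree.rec_1 (motive_1 := fun _ => R) (motive_2 := fun _ => R)
    (fun a ts ih => φ a * (if ts.isEmpty then 1 else P ih))
    1 (fun _ _ ihh iht => ihh * iht)

/-- Evaluation of `φ̄` on forests. -/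
noncomputable def phbF (φ : A → R) (P : R → R) (F : RForest A) : R :=
  (F.map (phbT φ P)).prod

lemma phbFaux_eq (φ : A → R) (P : R → R) (F : RForest A) :
    phbFaux φ P F = phbF φ P F := by
  induction F with
  | nil => simp [phbF]; rfl
  | cons t l ih =>
    have : phbFaux φ P (t :: l) = phbT φ P t * phbFaux φ P l := rfl
    rw [this, ih]; simp [phbF]

lemma phbT_eq (φ : A → R) (P : R → R) (a : A) (ts : RForest A) :
    phbT φ P (RTree.node a ts) = φ a * (if ts.isEmpty then 1 else P (phbF φ P ts)) := by
  have : phbT φ P (RTree.node a ts)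
      = φ a * (if ts.isEmpty then 1 else P (phbFaux φ P ts)) := rfl
  rw [this, phbFaux_eq]

lemma phbF_append (φ : A → R) (P : R → R) (F G : RForest A) :
    phbF φ P (F ++ G) = phbF φ P F * phbF φ P G := by
  simp [phbF]

lemma phbF_cons (φ : A → R) (P : R → R) (t : RTree A) (F : RForest A) :
    phbF φ P (t :: F) = phbT φ P t * phbF φ P F := by
  simp [phbF]

lemma phbF_nil (φ : A → R) (P : R → R) : phbF φ P ([] : RForest A) = 1 := by
  simp [phbF]

lemma phbF_singleton (φ : A → R) (P : R → R) (t : RTree A) :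
    phbF φ P [t] = phbT φ P t := by
  simp [phbF]

/-- The `P`-augmented evaluation (`1` on the empty forest). -/
noncomputable def qF (φ : A → R) (P : R → R) (G : RForest A) : R :=
  if G.isEmpty then 1 else P (phbF φ P G)

lemma qF_nil (φ : A → R) (P : R → R) : qF φ P ([] : RForest A) = 1 := rfl

lemma qF_ne (φ : A → R) (P : R → R) {G : RForest A} (h : G ≠ []) :
    qF φ P G = P (phbF φ P G) := by
  simp [qF, List.isEmpty_iff, h]

lemma phbT_node (φ : A → R) (P : R → R) (a : A) (G : RForest A) :
    phbT φ P (RTree.node a G) = φ a * qF φ P G := by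
  rw [phbT_eq]; rfl

lemma phbF_node (φ : A → R) (P : R → R) (a : A) (G : RForest A) :
    phbF φ P [RTree.node a G] = φ a * qF φ P G := by
  rw [phbF_singleton, phbT_node]

end AuxDefs

section Sizes

noncomputable def tsize {A : Type} : RTree A → ℕ :=
  RTree.rec (motive_1 := fun _ => ℕ) (motive_2 := fun _ => ℕ)
    (fun _ _ ih => ih + 1) 0 (fun _ _ a b => a + b)

noncomputable def fsize {A : Type} (F : RForest A) : ℕ := (F.map tsize).sum

lemma fsizeaux_eq {A : Type} (F : RForest A) :
    RTree.rec_1 (motive_1 := fun _ => ℕ) (motive_2 := fun _ => ℕ)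
      (fun _ _ ih => ih + 1) 0 (fun _ _ a b => a + b) F = fsize F := by
  induction F with
  | nil => rfl
  | cons t l ih =>
    have : RTree.rec_1 (motive_1 := fun _ => ℕ) (motive_2 := fun _ => ℕ)
      (fun _ _ ih => ih + 1) 0 (fun _ _ a b => a + b) (t :: l)
      = tsize t + RTree.rec_1 (motive_1 := fun _ => ℕ) (motive_2 := fun _ => ℕ)
      (fun _ _ ih => ih + 1) 0 (fun _ _ a b => a + b) l := rfl
    rw [this, ih]; simp [fsize]

lemma tsize_node {A : Type} (a : A) (ts : RForest A) :
    tsize (RTree.node a ts) = fsize ts + 1 := by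
  have : tsize (RTree.node a ts)
      = RTree.rec_1 (motive_1 := fun _ => ℕ) (motive_2 := fun _ => ℕ)
        (fun _ _ ih => ih + 1) 0 (fun _ _ a b => a + b) ts + 1 := rfl
  rw [this, fsizeaux_eq]

lemma tsize_pos {A : Type} (t : RTree A) : 1 ≤ tsize t := by
  cases t with | node a ts => rw [tsize_node]; omega

lemma tsize_le_of_mem {A : Type} {t : RTree A} {F : RForest A} (h : t ∈ F) :
    tsize t ≤ fsize F :=
  List.le_sum_of_mem (List.mem_map_of_mem (f := tsize) h)

lemma fsize_cons {A : Type} (t : RTree A) (l : RForest A) :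
    fsize (t :: l) = tsize t + fsize l := by simp [fsize]

lemma fsize_singleton {A : Type} (t : RTree A) : fsize [t] = tsize t := by simp [fsize]

lemma fsize_nil {A : Type} : fsize ([] : RForest A) = 0 := rfl

lemma fsize_pos {A : Type} {F : RForest A} (h : F ≠ []) : 1 ≤ fsize F := by
  cases F with
  | nil => simp at h
  | cons t l =>
    calc 1 ≤ tsize t := tsize_pos t
    _ ≤ fsize (t :: l) := tsize_le_of_mem List.mem_cons_self

end Sizes

section LinHelpers

variable {A R : Type} [CommRing R] [Algebra ℚ R]

lemma linC_mul (v : RForest A → R) (x : R) (l : FV A) :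
    Finsupp.linearCombination ℚ (fun G => x * v G) l
      = x * Finsupp.linearCombination ℚ v l := by
  rw [Finsupp.linearCombination_apply, Finsupp.linearCombination_apply,
    Finsupp.sum, Finsupp.sum, Finset.mul_sum]
  exact Finset.sum_congr rfl fun G _ => (mul_smul_comm _ _ _).symm

lemma linC_P (P : R →ₗ[ℚ] R) (v : RForest A → R) (x : R) (l : FV A) :
    Finsupp.linearCombination ℚ (fun G => P (x * v G)) l
      = P (x * Finsupp.linearCombination ℚ v l) := by
  rw [Finsupp.linearCombination_apply, Finsupp.linearCombination_apply,
    Finsupp.sum, Finsupp.sum, Finset.mul_sum, map_sum]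
  exact Finset.sum_congr rfl fun G _ => by rw [mul_smul_comm, map_smul]

lemma invsmul_sum {M : Type} [AddCommGroup M] [Module ℚ M] (k : ℕ) (hk : k ≠ 0) (x : M) :
    ((k : ℚ))⁻¹ • (∑ _i : Fin k, x) = x := by
  rw [Finset.sum_const, Finset.card_univ, Fintype.card_fin,
    ← Nat.cast_smul_eq_nsmul ℚ, smul_smul, inv_mul_cancel₀ (by exact_mod_cast hk), one_smul]

lemma invsmul_sum2 {M : Type} [AddCommGroup M] [Module ℚ M] (k n : ℕ)
    (hk : k ≠ 0) (hn : n ≠ 0) (x : M) :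
    ((k : ℚ) * (n : ℚ))⁻¹ • (∑ _i : Fin k, ∑ _j : Fin n, x) = x := by
  have h1 : (∑ _i : Fin k, ∑ _j : Fin n, x) = ((k : ℚ) * (n : ℚ)) • x := by
    rw [Finset.sum_const, Finset.sum_const, Finset.card_univ, Finset.card_univ,
      Fintype.card_fin, Fintype.card_fin, mul_smul, Nat.cast_smul_eq_nsmul,
      Nat.cast_smul_eq_nsmul]
  rw [h1, smul_smul, inv_mul_cancel₀ (by positivity), one_smul]

/-- `Φ` of a grafting. -/
lemma linC_graft (φ : A → R) (P : R → R) (b : A) (v : FV A) :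
    Finsupp.linearCombination ℚ (phbF φ P) (graftF b v)
      = φ b * Finsupp.linearCombination ℚ (qF φ P) v := by
  rw [graftF, Finsupp.lmapDomain_apply, Finsupp.linearCombination_mapDomain]
  have hcomp : (phbF φ P ∘ fun F => [RTree.node b F]) = fun G => φ b * qF φ P G :=
    funext fun G => phbF_node φ P b G
  rw [hcomp, linC_mul]

/-- `Φ` of an embedding. -/
lemma linC_embed (φ : A → R) (P : R → R) (F F' : RForest A) (i j : ℕ) (v : FV A) :
    Finsupp.linearCombination ℚ (phbF φ P) (embedF F F' i j v)
      = (phbF φ P (F.take i) * phbF φ P (F.drop (i + 1)) * phbF φ P (F'.eraseIdx j))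
        * Finsupp.linearCombination ℚ (phbF φ P) v := by
  rw [embedF, Finsupp.lmapDomain_apply, Finsupp.linearCombination_mapDomain]
  have hcomp : (phbF φ P ∘ fun G => F.take i ++ G ++ F.drop (i + 1) ++ F'.eraseIdx j)
      = fun G => (phbF φ P (F.take i) * phbF φ P (F.drop (i + 1)) * phbF φ P (F'.eraseIdx j))
        * phbF φ P G := by
    funext G
    simp only [Function.comp, phbF_append]
    ring
  rw [hcomp, linC_mul]

/-- `Φq` of a set-graft. -/
lemma linC_setGraft (φ : A → R) (P : R →ₗ[ℚ] R) (F : RForest A) (i : Fin F.length) (v : FV A) :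
    Finsupp.linearCombination ℚ (qF φ ⇑P) (setGraftF F i v)
      = P ((phbF φ ⇑P (F.take i) * phbF φ ⇑P (F.drop (i + 1))
            * φ (rootLabel (F.get i)))
          * Finsupp.linearCombination ℚ (qF φ ⇑P) v) := by
  rw [setGraftF, Finsupp.lmapDomain_apply, Finsupp.linearCombination_mapDomain]
  have hcomp : (qF φ ⇑P ∘ fun G => F.set i (RTree.node (rootLabel (F.get i)) G))
      = fun G => P ((phbF φ ⇑P (F.take i) * phbF φ ⇑P (F.drop (i + 1))
            * φ (rootLabel (F.get i))) * qF φ ⇑P G) := by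
    funext G
    have hne : F.set i (RTree.node (rootLabel (F.get i)) G) ≠ [] := by
      have hlen : (F.set i (RTree.node (rootLabel (F.get i)) G)).length = F.length :=
        List.length_set
      intro h
      rw [h] at hlen
      simp only [List.length_nil] at hlen
      have := i.isLt
      omega
    simp only [Function.comp]
    rw [qF_ne φ ⇑P hne, List.set_eq_take_append_cons_drop, if_pos i.isLt,
      phbF_append, phbF_cons, phbT_node]
    ring_nf
  rw [hcomp, linC_P]

lemma phbF_take_get_drop (φ : A → R) (P : R → R) (F : RForest A) (i : Fin F.length) :
    phbF φ P (F.take i) * (phbT φ P (F.get i) * phbF φ P (F.drop (i + 1))) = phbF φ P F := by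
  conv_rhs => rw [← List.take_append_drop i F]
  rw [phbF_append]
  congr 1
  rw [← List.getElem_cons_drop i.isLt, phbF_cons]
  rfl

lemma phbF_get_eraseIdx (φ : A → R) (P : R → R) (F : RForest A) (j : Fin F.length) :
    phbT φ P (F.get j) * phbF φ P (F.eraseIdx j) = phbF φ P F := by
  rw [List.eraseIdx_eq_take_drop_succ, phbF_append, ← phbF_take_get_drop φ P F j]
  ring

end LinHelpers

/-- given a commutative associative Rota–Baxter algebra `(R, P)`
of weight `λ` and an algebra homomorphism `φ : A → R`, there is a (linear, i.e.
determined on basis forests) map `φ̄` on nonempty `A`-decorated rooted forests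
with `φ̄(•_a) = φ(a)`, `φ̄(B₊^a(F)) = φ(a)P(φ̄(F))` and
`φ̄(T₁⋯T_n) = φ̄(T₁)⋯φ̄(T_n)`; it is unique (on nonempty forests) with these
properties, intertwines `B₊^{1_A}` with `P`, and is multiplicative for `⋄_λ`. -/
theorem free_RotaBaxter_property {A R : Type} [CommRing A] [CommRing R] [Algebra ℚ R]
    (lam : ℚ) (φ : A →+* R) (P : R →ₗ[ℚ] R)
    (hP : ∀ x y : R, P x * P y = P (x * P y) + P (P x * y) + lam • P (x * y))
    (dia ast : RForest A → RForest A → FV A)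
    (hast0l : ∀ f, ast [] f = Finsupp.single f 1)
    (hast0r : ∀ f, ast f [] = Finsupp.single f 1)
    (hdiaTree : ∀ (a a' : A) (F F' : RForest A),
      dia [RTree.node a F] [RTree.node a' F'] = graftF (a * a') (ast F F'))
    (hdiaForest : ∀ F F' : RForest A, F ≠ [] → F' ≠ [] →
      dia F F' = ((F.length * F'.length : ℚ))⁻¹ •
        ∑ i : Fin F.length, ∑ j : Fin F'.length,
          embedF F F' i j (dia [F.get i] [F'.get j]))
    (hastForest : ∀ F F' : RForest A, F ≠ [] → F' ≠ [] →
      ast F F' =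
        ((F.length : ℚ))⁻¹ • (∑ i : Fin F.length,
            setGraftF F i (ast (childrenOf (F.get i)) F'))
          + ((F'.length : ℚ))⁻¹ • (∑ j : Fin F'.length,
            setGraftF F' j (ast F (childrenOf (F'.get j))))
          + lam • dia F F') :
    ∃ φb : RForest A → R,
      ((∀ a : A, φb [RTree.node a []] = φ a)
        ∧ (∀ (a : A) (F : RForest A), F ≠ [] → φb [RTree.node a F] = φ a * P (φb F))
        ∧ (∀ F G : RForest A, F ≠ [] → G ≠ [] → φb (F ++ G) = φb F * φb G))
      ∧ (∀ ψ : RForest A → R,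
          ((∀ a : A, ψ [RTree.node a []] = φ a)
            ∧ (∀ (a : A) (F : RForest A), F ≠ [] → ψ [RTree.node a F] = φ a * P (ψ F))
            ∧ (∀ F G : RForest A, F ≠ [] → G ≠ [] → ψ (F ++ G) = ψ F * ψ G)) →
          ∀ F : RForest A, F ≠ [] → ψ F = φb F)
      ∧ (∀ F : RForest A, F ≠ [] → φb [RTree.node (1 : A) F] = P (φb F))
      ∧ (∀ F F' : RForest A, F ≠ [] → F' ≠ [] →
          ((dia F F').sum fun G c => c • φb G) = φb F * φb F') := by
  classical
  -- the zero-coefficient lemma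
  have hZ : ∀ F F' : RForest A, F ≠ [] → F' ≠ [] → (dia F F') [] = 0 := by
    intro F F' hF hF'
    have h0 : (∑ i : Fin F.length, ∑ j : Fin F'.length,
        embedF F F' i j (dia [F.get i] [F'.get j])) ([] : RForest A) = 0 := by
      rw [Finset.sum_apply']
      apply Finset.sum_eq_zero
      intro i _
      rw [Finset.sum_apply']
      apply Finset.sum_eq_zero
      intro j _
      cases hgi : F.get i with | node a C => ?_
      cases hgj : F'.get j with | node a' C' => ?_
      rw [hdiaTree, embedF, graftF, Finsupp.lmapDomain_apply, Finsupp.lmapDomain_apply,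
        ← Finsupp.mapDomain_comp]
      apply Finsupp.mapDomain_notin_range
      rintro ⟨G, hG⟩
      simp [Function.comp] at hG
    rw [hdiaForest F F' hF hF', Finsupp.smul_apply, h0, smul_zero]
  -- the central simultaneous induction
  have key : ∀ n : ℕ, ∀ F F' : RForest A, fsize F + fsize F' = n →
      ((F ≠ [] → F' ≠ [] →
        Finsupp.linearCombination ℚ (phbF (⇑φ) (⇑P)) (dia F F')
          = phbF (⇑φ) (⇑P) F * phbF (⇑φ) (⇑P) F')
       ∧ Finsupp.linearCombination ℚ (qF (⇑φ) (⇑P)) (ast F F')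
          = qF (⇑φ) (⇑P) F * qF (⇑φ) (⇑P) F') := by
    intro n
    induction n using Nat.strong_induction_on with
    | _ n IH =>
    intro F F' hn
    have hDT : ∀ (i : Fin F.length) (j : Fin F'.length),
        Finsupp.linearCombination ℚ (phbF (⇑φ) (⇑P)) (dia [F.get i] [F'.get j])
          = phbT (⇑φ) (⇑P) (F.get i) * phbT (⇑φ) (⇑P) (F'.get j) := by
      intro i j
      have hszC : tsize (F.get i) ≤ fsize F := tsize_le_of_mem (List.get_mem F _)
      have hszC' : tsize (F'.get j) ≤ fsize F' := tsize_le_of_mem (List.get_mem F' _)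
      cases hgi : F.get i with | node a C => ?_
      cases hgj : F'.get j with | node a' C' => ?_
      rw [hgi, tsize_node] at hszC
      rw [hgj, tsize_node] at hszC'
      have hlt : fsize C + fsize C' < n := by omega
      have hA' := (IH _ hlt C C' rfl).2
      rw [hdiaTree, linC_graft, hA', map_mul, phbT_node, phbT_node]
      ring
    have hD : F ≠ [] → F' ≠ [] →
        Finsupp.linearCombination ℚ (phbF (⇑φ) (⇑P)) (dia F F')
          = phbF (⇑φ) (⇑P) F * phbF (⇑φ) (⇑P) F' := by
      intro hF hF'
      have hterm : ∀ i : Fin F.length, ∀ j : Fin F'.length,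
          Finsupp.linearCombination ℚ (phbF (⇑φ) (⇑P))
              (embedF F F' i j (dia [F.get i] [F'.get j]))
            = phbF (⇑φ) (⇑P) F * phbF (⇑φ) (⇑P) F' := by
        intro i j
        rw [linC_embed, hDT i j, ← phbF_take_get_drop (⇑φ) (⇑P) F i,
          ← phbF_get_eraseIdx (⇑φ) (⇑P) F' j]
        ring
      rw [hdiaForest F F' hF hF']
      simp only [map_smul, map_sum]
      simp only [hterm]
      exact invsmul_sum2 _ _ (fun h => hF (List.length_eq_zero_iff.mp h))
        (fun h => hF' (List.length_eq_zero_iff.mp h)) _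
    have hA : Finsupp.linearCombination ℚ (qF (⇑φ) (⇑P)) (ast F F')
        = qF (⇑φ) (⇑P) F * qF (⇑φ) (⇑P) F' := by
      by_cases hF : F = []
      · subst hF
        rw [hast0l, Finsupp.linearCombination_single, one_smul, qF_nil, one_mul]
      by_cases hF' : F' = []
      · subst hF'
        rw [hast0r, Finsupp.linearCombination_single, one_smul, qF_nil, mul_one]
      have hterm1 : ∀ i : Fin F.length,
          Finsupp.linearCombination ℚ (qF (⇑φ) (⇑P))
              (setGraftF F i (ast (childrenOf (F.get i)) F'))
            = P (phbF (⇑φ) (⇑P) F * P (phbF (⇑φ) (⇑P) F')) := by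
        intro i
        have hszC : tsize (F.get i) ≤ fsize F := tsize_le_of_mem (List.get_mem F _)
        rw [linC_setGraft]
        cases hgi : F.get i with | node a C => ?_
        rw [hgi, tsize_node] at hszC
        have hlt : fsize C + fsize F' < n := by
          have := fsize_pos hF'
          omega
        have hA' := (IH _ hlt C F' rfl).2
        simp only [rootLabel, childrenOf]
        rw [hA', qF_ne _ _ hF']
        congr 1
        rw [← phbF_take_get_drop (⇑φ) (⇑P) F i, hgi, phbT_node]
        ring
      have hterm2 : ∀ j : Fin F'.length,
          Finsupp.linearCombination ℚ (qF (⇑φ) (⇑P))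
              (setGraftF F' j (ast F (childrenOf (F'.get j))))
            = P (P (phbF (⇑φ) (⇑P) F) * phbF (⇑φ) (⇑P) F') := by
        intro j
        have hszC : tsize (F'.get j) ≤ fsize F' := tsize_le_of_mem (List.get_mem F' _)
        rw [linC_setGraft]
        cases hgj : F'.get j with | node a' C' => ?_
        rw [hgj, tsize_node] at hszC
        have hlt : fsize F + fsize C' < n := by
          have := fsize_pos hF
          omega
        have hA' := (IH _ hlt F C' rfl).2
        simp only [rootLabel, childrenOf]
        rw [hA', qF_ne _ _ hF]
        congr 1
        rw [← phbF_take_get_drop (⇑φ) (⇑P) F' j, hgj, phbT_node]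
        ring
      have h3 : Finsupp.linearCombination ℚ (qF (⇑φ) (⇑P)) (dia F F')
          = P (Finsupp.linearCombination ℚ (phbF (⇑φ) (⇑P)) (dia F F')) := by
        rw [Finsupp.linearCombination_apply, Finsupp.linearCombination_apply, map_finsuppSum]
        apply Finsupp.sum_congr
        intro G hG
        have hGne : G ≠ [] := by
          rintro rfl
          exact Finsupp.mem_support_iff.mp hG (hZ F F' hF hF')
        rw [map_smul, qF_ne _ _ hGne]
      rw [hastForest F F' hF hF', map_add, map_add, map_smul, map_smul, map_smul,
        map_sum, map_sum]
      simp only [hterm1, hterm2]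
      rw [h3, hD hF hF',
        invsmul_sum _ (fun h => hF (List.length_eq_zero_iff.mp h)) _,
        invsmul_sum _ (fun h => hF' (List.length_eq_zero_iff.mp h)) _,
        qF_ne _ _ hF, qF_ne _ _ hF',
        hP (phbF (⇑φ) (⇑P) F) (phbF (⇑φ) (⇑P) F')]
    exact ⟨hD, hA⟩
  -- uniqueness
  have huniq : ∀ ψ : RForest A → R,
      ((∀ a : A, ψ [RTree.node a []] = φ a)
        ∧ (∀ (a : A) (F : RForest A), F ≠ [] → ψ [RTree.node a F] = φ a * P (ψ F))
        ∧ (∀ F G : RForest A, F ≠ [] → G ≠ [] → ψ (F ++ G) = ψ F * ψ G)) →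
      ∀ F : RForest A, F ≠ [] → ψ F = phbF (⇑φ) (⇑P) F := by
    rintro ψ ⟨h1, h2, h3⟩
    have main : ∀ n : ℕ, ∀ F : RForest A, fsize F ≤ n → F ≠ [] →
        ψ F = phbF (⇑φ) (⇑P) F := by
      intro n
      induction n with
      | zero =>
        intro F hsz hne
        have := fsize_pos hne
        omega
      | succ n ih =>
        intro F hsz hne
        match F with
        | RTree.node a C :: rest =>
          have hszF : fsize (RTree.node a C :: rest) = (fsize C + 1) + fsize rest := by
            rw [fsize_cons, tsize_node]
          rw [hszF] at hsz
          by_cases hrest : rest = []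
          · subst hrest
            rw [fsize_nil] at hsz
            by_cases hC : C = []
            · subst hC
              rw [h1 a, phbF_node, qF_nil, mul_one]
            · rw [h2 a C hC, phbF_node, qF_ne _ _ hC, ih C (by omega) hC]
          · have hsplit : RTree.node a C :: rest = [RTree.node a C] ++ rest := rfl
            have hrge : 1 ≤ fsize rest := fsize_pos hrest
            have e1 : ψ [RTree.node a C] = phbF (⇑φ) (⇑P) [RTree.node a C] := by
              apply ih
              · rw [fsize_singleton, tsize_node]
                omega
              · simp
            have e2 : ψ rest = phbF (⇑φ) (⇑P) rest := by
              apply ih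
              · omega
              · exact hrest
            rw [hsplit, h3 [RTree.node a C] rest (by simp) hrest, phbF_append, e1, e2]
    exact fun F hF => main (fsize F) F le_rfl hF
  refine ⟨phbF (⇑φ) (⇑P), ⟨?_, ?_, ?_⟩, huniq, ?_, ?_⟩
  · intro a; rw [phbF_node, qF_nil, mul_one]
  · intro a F hF; rw [phbF_node, qF_ne _ _ hF]
  · intro F G _ _; exact phbF_append _ _ F G
  · intro F hF
    rw [phbF_node, qF_ne _ _ hF, map_one, one_mul]
  · intro F F' hF hF'
    have h := (key (fsize F + fsize F') F F' rfl).1 hF hF'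
    rw [← h, Finsupp.linearCombination_apply]
end
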